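/- arXiv:2207.03847 — 5 statements merged into one kernel-verified Lean document; each statement's English description precedes it below -/
import Mathlib

section
/- Define the kernel $K_t(z,w) = \pi^{-n}(1-e^{-t})^{-n} \exp\big(z \cdot \overline{w} - \frac{e^{-t}|z-w|^2}{1-e^{-t}} - |w|^2\big)$ on $\mathbb{C}^n \times \mathbb{C}^n$ for $t > 0$. Then for all $t, s > 0$ and $\xi, w \in \mathbb{C}^n$, $\int_{\mathbb{C}^n} K_t(z,w) K_s(\xi,z) \, d\ell(z) = K_{t+s}(\xi,w)$. -/
open MeasureTheory Complex

noncomputable section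

/-- Euclidean norm on `ℂⁿ = Fin n → ℂ`. -/
def enorm' {n : ℕ} (w : Fin n → ℂ) : ℝ := Real.sqrt (∑ j, Complex.normSq (w j))

/-- Standard complex Gaussian measure on `ℂⁿ`, with density `π⁻ⁿ e^{-|w|²}`
w.r.t. Lebesgue measure. -/
def gaussianC (n : ℕ) : Measure (Fin n → ℂ) :=
  volume.withDensity (fun w => ENNReal.ofReal (Real.pi ^ (-(n:ℤ)) * Real.exp (-(enorm' w)^2)))

/-- Bilinear dot product `z · w = ∑ zⱼ wⱼ` (no conjugation). -/
def dotC {n : ℕ} (z w : Fin n → ℂ) : ℂ := ∑ j, z j * w j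

/-- Coordinatewise complex conjugation. -/
def confj {n : ℕ} (z : Fin n → ℂ) : Fin n → ℂ := fun j => (starRingEnd ℂ) (z j)

/-- Real directional derivative in direction `v`. -/
def pder {n : ℕ} (v : Fin n → ℂ) (f : (Fin n → ℂ) → ℂ) (z : Fin n → ℂ) : ℂ := fderiv ℝ f z v

/-- Wirtinger derivative `∂_{z_j} = (∂_{x_j} - i ∂_{y_j})/2`. -/
def wdz {n : ℕ} (j : Fin n) (f : (Fin n → ℂ) → ℂ) (z : Fin n → ℂ) : ℂ :=
  (1/2) * (pder (Pi.single j 1) f z - Complex.I * pder (Pi.single j Complex.I) f z)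

/-- Wirtinger derivative `∂_{z̄_j} = (∂_{x_j} + i ∂_{y_j})/2`. -/
def wdzbar {n : ℕ} (j : Fin n) (f : (Fin n → ℂ) → ℂ) (z : Fin n → ℂ) : ℂ :=
  (1/2) * (pder (Pi.single j 1) f z + Complex.I * pder (Pi.single j Complex.I) f z)

/-- The operator `L f = ∑ⱼ (∂²_{z_j z̄_j} f - z̄_j ∂_{z̄_j} f)`. -/
def Lop {n : ℕ} (f : (Fin n → ℂ) → ℂ) (z : Fin n → ℂ) : ℂ :=
  ∑ j, (wdz j (wdzbar j f) z - (starRingEnd ℂ) (z j) * wdzbar j f z)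

/-- The operator `L̄ f = ∑ⱼ (∂²_{z_j z̄_j} f - z_j ∂_{z_j} f)`. -/
def Lbarop {n : ℕ} (f : (Fin n → ℂ) → ℂ) (z : Fin n → ℂ) : ℂ :=
  ∑ j, (wdz j (wdzbar j f) z - z j * wdz j f z)

/-- Ornstein–Uhlenbeck generator `L^{ou} f = Δf/4 - ⟨w, ∇f⟩/2` on `ℂⁿ ≃ ℝ²ⁿ`. -/
def Louop {n : ℕ} (f : (Fin n → ℂ) → ℂ) (z : Fin n → ℂ) : ℂ :=
  (1/4) * ∑ j, (pder (Pi.single j 1) (pder (Pi.single j 1) f) z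
      + pder (Pi.single j Complex.I) (pder (Pi.single j Complex.I) f) z)
  - (1/2) * ∑ j, (((z j).re : ℂ) * pder (Pi.single j 1) f z
      + ((z j).im : ℂ) * pder (Pi.single j Complex.I) f z)

/-- Sub-Gaussian growth: `‖f(w)‖ ≤ e^{c ‖w‖^{2-ε}}` for large `‖w‖`. -/
def SubGauss {n : ℕ} {α : Type*} [Norm α] (f : (Fin n → ℂ) → α) : Prop :=
  ∃ ε > (0:ℝ), ∃ c > (0:ℝ), ∃ C > (0:ℝ), ∀ w, C ≤ enorm' w →
    ‖f w‖ ≤ Real.exp (c * enorm' w ^ (2 - ε))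

/-- Smooth with all derivatives of sub-Gaussian growth. -/
def SmoothSubGauss {n : ℕ} (f : (Fin n → ℂ) → ℂ) : Prop :=
  ContDiff ℝ (⊤ : ℕ∞) f ∧ ∀ k : ℕ, ∃ ε > (0:ℝ), ∃ c > (0:ℝ), ∃ C > (0:ℝ), ∀ w, C ≤ enorm' w →
    ‖iteratedFDeriv ℝ k f w‖ ≤ Real.exp (c * enorm' w ^ (2 - ε))

/-- Circular symmetry: invariance under multiplication by unit complex numbers. -/
def CircSym {n : ℕ} {α : Type*} (f : (Fin n → ℂ) → α) : Prop :=
  ∀ (θ : ℝ) (w : Fin n → ℂ), f (Complex.exp (θ * Complex.I) • w) = f w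

/-- Subharmonicity on `ℂ` via upper semicontinuity and the circle sub-mean value property. -/
def SubharmonicC (v : ℂ → ℝ) : Prop :=
  UpperSemicontinuous v ∧ ∀ (c : ℂ) (r : ℝ), 0 < r →
    v c ≤ (1 / (2 * Real.pi)) *
      ∫ θ in (0:ℝ)..(2 * Real.pi), v (c + (r : ℂ) * Complex.exp (θ * Complex.I))

/-- Plurisubharmonicity: usc and subharmonic along every complex line. -/
def Psh {n : ℕ} (u : (Fin n → ℂ) → ℝ) : Prop :=
  UpperSemicontinuous u ∧ ∀ a b : Fin n → ℂ, SubharmonicC (fun z => u (a + z • b))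

/-- The semigroup `P_t` defined by the explicit integral formula. -/
def Pt {n : ℕ} (t : ℝ) (f : (Fin n → ℂ) → ℂ) (z : Fin n → ℂ) : ℂ :=
  ∫ ξ, f (z + Real.sqrt (1 - Real.exp (-t)) • ξ) *
    Complex.exp (-(Real.sqrt (1 - Real.exp (-t)) : ℂ) * dotC (confj z) ξ) ∂(gaussianC n)

/-- The kernel `K_t(z,w)` of the semigroup `e^{tL}`. -/
def Kker {n : ℕ} (t : ℝ) (z w : Fin n → ℂ) : ℂ :=
  ((Real.pi ^ (-(n:ℤ)) * (1 - Real.exp (-t)) ^ (-(n:ℤ)) : ℝ) : ℂ) *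
    Complex.exp (dotC z (confj w)
      - ((Real.exp (-t) / (1 - Real.exp (-t)) : ℝ) : ℂ) * ((enorm' (z - w))^2 : ℝ)
      - ((enorm' w)^2 : ℝ))

/-- The Ornstein–Uhlenbeck kernel `K_t^{ou}(z,w)`. -/
def Kou {n : ℕ} (t : ℝ) (z w : Fin n → ℂ) : ℂ :=
  ((Real.pi ^ (-(n:ℤ)) * (1 - Real.exp (-t)) ^ (-(n:ℤ)) *
    Real.exp (-(1 / (1 - Real.exp (-t))) * (enorm' (w - Real.exp (-t/2) • z))^2) : ℝ) : ℂ)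

end

noncomputable section AuxGauss

lemma gauss_line (α : ℝ) (hα : 0 < α) (c : ℂ) :
    ∫ x : ℝ, Complex.exp (-(α:ℂ) * x ^ 2 + c * x)
      = ((Real.pi : ℂ) / α) ^ (1/2 : ℂ) * Complex.exp (c ^ 2 / (4 * α)) := by
  have hb : (-(α:ℂ)).re < 0 := by simpa using hα
  have := integral_cexp_quadratic hb c 0
  simp only [add_zero, zero_sub, neg_neg] at this
  rw [this]
  congr 1
  rw [mul_neg, div_neg, neg_neg]

lemma gauss_plane (α : ℝ) (hα : 0 < α) (β γ : ℂ) :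
    ∫ z : ℂ, Complex.exp (-(α:ℂ) * (Complex.normSq z : ℂ) + β * z + γ * (starRingEnd ℂ) z)
      = ((Real.pi / α : ℝ) : ℂ) * Complex.exp (β * γ / α) := by
  rw [← (Complex.volume_preserving_equiv_real_prod.symm).integral_comp
    Complex.measurableEquivRealProd.symm.measurableEmbedding]
  have h1 : ∀ p : ℝ × ℝ,
      Complex.exp (-(α:ℂ) * (Complex.normSq (Complex.measurableEquivRealProd.symm p) : ℂ)
        + β * (Complex.measurableEquivRealProd.symm p)
        + γ * (starRingEnd ℂ) (Complex.measurableEquivRealProd.symm p))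
      = Complex.exp (-(α:ℂ) * (p.1:ℂ) ^ 2 + (β + γ) * p.1)
        * Complex.exp (-(α:ℂ) * (p.2:ℂ) ^ 2 + ((β - γ) * Complex.I) * p.2) := by
    intro p
    rw [← Complex.exp_add, Complex.measurableEquivRealProd_symm_apply]
    congr 1
    simp only [Complex.normSq_apply, Complex.add_re, Complex.ofReal_re, Complex.mul_re,
      Complex.I_re, Complex.I_im, Complex.ofReal_im, Complex.add_im, Complex.mul_im,
      map_add, map_mul, Complex.conj_ofReal, Complex.conj_I, Complex.mk_eq_add_mul_I]
    push_cast
    ring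
  simp_rw [h1]
  rw [show (volume : Measure (ℝ × ℝ)) = (volume : Measure ℝ).prod volume from rfl]
  rw [MeasureTheory.integral_prod_mul
    (f := fun x : ℝ => Complex.exp (-(α:ℂ) * (x:ℂ) ^ 2 + (β + γ) * x))
    (g := fun y : ℝ => Complex.exp (-(α:ℂ) * (y:ℂ) ^ 2 + ((β - γ) * Complex.I) * y)), gauss_line α hα (β + γ), gauss_line α hα ((β - γ) * Complex.I)]
  have hne : (Real.pi : ℂ) / α ≠ 0 := by
    apply div_ne_zero
    · exact_mod_cast Real.pi_ne_zero
    · exact_mod_cast hα.ne'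
  have hαc : (α : ℂ) ≠ 0 := by exact_mod_cast hα.ne'
  rw [mul_mul_mul_comm, ← Complex.cpow_add _ _ hne, ← Complex.exp_add]
  have h2 : (1/2 + 1/2 : ℂ) = 1 := by norm_num
  rw [h2, Complex.cpow_one]
  push_cast
  congr 1
  rw [mul_pow, Complex.I_sq]
  field_simp
  ring

set_option maxHeartbeats 1000000 in
lemma scalar_conv {u v : ℝ} (hu0 : 0 < u) (hu1 : u < 1) (hv0 : 0 < v) (hv1 : v < 1) (w ξ : ℂ) :
    ∫ z : ℂ, Complex.exp (z * (starRingEnd ℂ) w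
        - ((u/(1-u) : ℝ) : ℂ) * ((Complex.normSq (z-w) : ℝ) : ℂ)
        - ((Complex.normSq w : ℝ) : ℂ)
        + (ξ * (starRingEnd ℂ) z - ((v/(1-v) : ℝ) : ℂ) * ((Complex.normSq (ξ-z) : ℝ) : ℂ)
          - ((Complex.normSq z : ℝ) : ℂ)))
      = ((Real.pi * (1-u) * (1-v) / (1-u*v) : ℝ) : ℂ) *
        Complex.exp (ξ * (starRingEnd ℂ) w
          - ((u*v/(1-u*v) : ℝ) : ℂ) * ((Complex.normSq (ξ-w) : ℝ) : ℂ)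
          - ((Complex.normSq w : ℝ) : ℂ)) := by
  have h1u : (0:ℝ) < 1 - u := by linarith
  have h1v : (0:ℝ) < 1 - v := by linarith
  have huv : u * v < 1 := by nlinarith
  have h1uv : (0:ℝ) < 1 - u * v := by linarith
  have hα : (0:ℝ) < (1 - u*v)/((1-u)*(1-v)) := by positivity
  have hcu : (1 - (u:ℂ)) ≠ 0 := by
    rw [show (1 - (u:ℂ)) = ((1-u : ℝ) : ℂ) by push_cast; ring]
    exact_mod_cast h1u.ne'
  have hcv : (1 - (v:ℂ)) ≠ 0 := by
    rw [show (1 - (v:ℂ)) = ((1-v : ℝ) : ℂ) by push_cast; ring]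
    exact_mod_cast h1v.ne'
  have hcuv : (1 - (u:ℂ)*(v:ℂ)) ≠ 0 := by
    rw [show (1 - (u:ℂ)*(v:ℂ)) = ((1-u*v : ℝ) : ℂ) by push_cast; ring]
    exact_mod_cast h1uv.ne'
  set α : ℝ := (1 - u*v)/((1-u)*(1-v)) with hαdef
  set β : ℂ := (starRingEnd ℂ) w / (1 - (u:ℂ)) + ((v:ℂ)/(1-(v:ℂ))) * (starRingEnd ℂ) ξ with hβdef
  set γ : ℂ := ((u:ℂ)/(1-(u:ℂ))) * w + ξ / (1 - (v:ℂ)) with hγdef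
  set δ : ℂ := -((Complex.normSq w : ℝ):ℂ)/(1-(u:ℂ))
      - ((v:ℂ)/(1-(v:ℂ))) * ((Complex.normSq ξ : ℝ):ℂ) with hδdef
  have hαc : ((α:ℝ):ℂ) = ((1:ℂ) - u*v)/((1-(u:ℂ))*(1-(v:ℂ))) := by
    rw [hαdef]; push_cast; ring
  have hA : ∀ z : ℂ, Complex.exp (z * (starRingEnd ℂ) w
        - ((u/(1-u) : ℝ) : ℂ) * ((Complex.normSq (z-w) : ℝ) : ℂ)
        - ((Complex.normSq w : ℝ) : ℂ)
        + (ξ * (starRingEnd ℂ) z - ((v/(1-v) : ℝ) : ℂ) * ((Complex.normSq (ξ-z) : ℝ) : ℂ)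
          - ((Complex.normSq z : ℝ) : ℂ)))
      = Complex.exp (-((α:ℝ):ℂ) * (Complex.normSq z : ℂ) + β * z + γ * (starRingEnd ℂ) z)
        * Complex.exp δ := by
    intro z
    rw [← Complex.exp_add]
    congr 1
    rw [hαc, hβdef, hγdef, hδdef]
    simp only [← Complex.mul_conj, map_sub]
    push_cast
    field_simp
    ring
  simp_rw [hA]
  rw [integral_mul_const, gauss_plane α hα β γ]
  rw [mul_assoc, ← Complex.exp_add]
  congr 1
  · norm_cast
    rw [hαdef]
    field_simp
  · congr 1
    have h3 : ((1:ℂ) - ↑u*↑v) * ((1 - ↑u) * (1 - ↑v)) ≠ 0 :=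
      mul_ne_zero hcuv (mul_ne_zero hcu hcv)
    apply mul_right_cancel₀ h3
    have e1 : (β * γ / ↑α) * (((1:ℂ) - ↑u*↑v) * ((1 - ↑u) * (1 - ↑v)))
        = (β * ((1 - ↑u) * (1 - ↑v))) * (γ * ((1 - ↑u) * (1 - ↑v))) := by
      rw [hαc]
      field_simp
    have hb2 : β * ((1 - ↑u) * (1 - ↑v))
        = (1 - (v:ℂ)) * (starRingEnd ℂ) w + ↑v * (1 - (u:ℂ)) * (starRingEnd ℂ) ξ := by
      rw [hβdef]; field_simp
    have hg2 : γ * ((1 - ↑u) * (1 - ↑v)) = ↑u * (1 - (v:ℂ)) * w + (1 - (u:ℂ)) * ξ := by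
      rw [hγdef]; field_simp
    have hd2 : δ * ((1 - ↑u) * (1 - ↑v))
        = -((1 - (v:ℂ)) * ((Complex.normSq w : ℝ):ℂ))
          - ↑v * (1 - (u:ℂ)) * ((Complex.normSq ξ : ℝ):ℂ) := by
      rw [hδdef]; field_simp
    have e2 : δ * (((1:ℂ) - ↑u*↑v) * ((1 - ↑u) * (1 - ↑v)))
        = (δ * ((1 - ↑u) * (1 - ↑v))) * ((1:ℂ) - ↑u*↑v) := by ring
    rw [add_mul, e1, e2, hb2, hg2, hd2]
    rw [show ((u*v/(1-u*v) : ℝ) : ℂ) = ↑u*↑v/(1-↑u*↑v) by push_cast; ring]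
    simp only [← Complex.mul_conj, map_sub]
    have hcuv' : (1 - (v:ℂ)*(u:ℂ)) ≠ 0 := by rw [mul_comm]; exact hcuv
    field_simp
    ring

end AuxGauss

set_option maxHeartbeats 1000000 in
theorem kernel_semigroup_property (n : ℕ) (t s : ℝ) (ht : 0 < t) (hs : 0 < s)
    (ξ w : Fin n → ℂ) :
    ∫ z : Fin n → ℂ, Kker t z w * Kker s ξ z = Kker (t + s) ξ w := by
  set u := Real.exp (-t) with hu
  set v := Real.exp (-s) with hv
  have hu0 : 0 < u := Real.exp_pos _
  have hv0 : 0 < v := Real.exp_pos _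
  have hu1 : u < 1 := by rw [hu]; exact Real.exp_lt_one_iff.mpr (by linarith)
  have hv1 : v < 1 := by rw [hv]; exact Real.exp_lt_one_iff.mpr (by linarith)
  have huv : Real.exp (-(t+s)) = u * v := by rw [neg_add, Real.exp_add]
  have hesum : ∀ x : Fin n → ℂ, (enorm' x)^2 = ∑ j, Complex.normSq (x j) := by
    intro x
    exact Real.sq_sqrt (Finset.sum_nonneg fun j _ => Complex.normSq_nonneg _)
  -- pointwise factorization
  have hfac : ∀ z : Fin n → ℂ, Kker t z w * Kker s ξ z
      = (((Real.pi ^ (-(n:ℤ)) * (1 - u) ^ (-(n:ℤ)) : ℝ) * (Real.pi ^ (-(n:ℤ)) * (1 - v) ^ (-(n:ℤ)) : ℝ) : ℝ) : ℂ)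
        * ∏ j, Complex.exp ((z j) * (starRingEnd ℂ) (w j)
          - ((u/(1-u) : ℝ) : ℂ) * ((Complex.normSq (z j - w j) : ℝ) : ℂ)
          - ((Complex.normSq (w j) : ℝ) : ℂ)
          + (ξ j * (starRingEnd ℂ) (z j)
            - ((v/(1-v) : ℝ) : ℂ) * ((Complex.normSq (ξ j - z j) : ℝ) : ℂ)
            - ((Complex.normSq (z j) : ℝ) : ℂ))) := by
    intro z
    rw [← Complex.exp_sum]
    simp only [Kker, dotC, confj, ← hu, ← hv]
    rw [show ∀ (a b : ℂ) (c d : ℂ), (a * b) * (c * d) = (a*c) * (b*d) by intros; ring]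
    rw [← Complex.exp_add]
    congr 1
    · push_cast; ring
    · simp only [hesum, Pi.sub_apply]
      push_cast
      try simp only [Finset.mul_sum, Finset.sum_add_distrib, Finset.sum_sub_distrib]
      try ring
  simp_rw [hfac]
  rw [MeasureTheory.integral_const_mul]
  rw [MeasureTheory.volume_pi]
  rw [MeasureTheory.integral_fintype_prod_eq_prod
    (f := fun j ζ => Complex.exp (ζ * (starRingEnd ℂ) (w j)
      - ((u/(1-u) : ℝ) : ℂ) * ((Complex.normSq (ζ - w j) : ℝ) : ℂ)
      - ((Complex.normSq (w j) : ℝ) : ℂ)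
      + (ξ j * (starRingEnd ℂ) ζ
        - ((v/(1-v) : ℝ) : ℂ) * ((Complex.normSq (ξ j - ζ) : ℝ) : ℂ)
        - ((Complex.normSq ζ : ℝ) : ℂ))))]
  have hint : ∀ j, (∫ ζ : ℂ, Complex.exp (ζ * (starRingEnd ℂ) (w j)
      - ((u/(1-u) : ℝ) : ℂ) * ((Complex.normSq (ζ - w j) : ℝ) : ℂ)
      - ((Complex.normSq (w j) : ℝ) : ℂ)
      + (ξ j * (starRingEnd ℂ) ζ
        - ((v/(1-v) : ℝ) : ℂ) * ((Complex.normSq (ξ j - ζ) : ℝ) : ℂ)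
        - ((Complex.normSq ζ : ℝ) : ℂ))))
      = ((Real.pi * (1-u) * (1-v) / (1-u*v) : ℝ) : ℂ) *
        Complex.exp (ξ j * (starRingEnd ℂ) (w j)
          - ((u*v/(1-u*v) : ℝ) : ℂ) * ((Complex.normSq (ξ j - w j) : ℝ) : ℂ)
          - ((Complex.normSq (w j) : ℝ) : ℂ)) :=
    fun j => scalar_conv hu0 hu1 hv0 hv1 (w j) (ξ j)
  simp_rw [hint]
  rw [Finset.prod_mul_distrib, Finset.prod_const, ← Complex.exp_sum, Finset.card_univ,
    Fintype.card_fin]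
  -- final assembly
  rw [Kker, huv]
  have h1u : (0:ℝ) < 1 - u := by linarith
  have h1v : (0:ℝ) < 1 - v := by linarith
  have h1uv : (0:ℝ) < 1 - u * v := by nlinarith
  rw [show ∀ (a b c : ℂ), a * (b * c) = (a * b) * c by intros; ring]
  congr 1
  · rw [show (((Real.pi * (1-u) * (1-v) / (1-u*v) : ℝ)) : ℂ) ^ n
        = (((Real.pi * (1-u) * (1-v) / (1-u*v))^n : ℝ) : ℂ) by push_cast; ring]
    rw [← Complex.ofReal_mul]
    congr 1
    rw [zpow_neg, zpow_neg, zpow_neg, zpow_neg, zpow_natCast, zpow_natCast, zpow_natCast,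
      zpow_natCast, div_pow, mul_pow, mul_pow]
    have e1 : Real.pi ^ n ≠ 0 := pow_ne_zero _ Real.pi_ne_zero
    have e2 : (1-u) ^ n ≠ 0 := pow_ne_zero _ h1u.ne'
    have e3 : (1-v) ^ n ≠ 0 := pow_ne_zero _ h1v.ne'
    have e4 : (1-u*v) ^ n ≠ 0 := pow_ne_zero _ h1uv.ne'
    field_simp
  · congr 1
    simp only [hesum, dotC, confj, Pi.sub_apply]
    push_cast
    simp only [Finset.mul_sum, Finset.sum_sub_distrib]
    try ring
end

section
/- For fixed $w \in \mathbb{C}^n$ and $t > 0$, the kernel $K_t(z,w) = \pi^{-n}(1-e^{-t})^{-n} \exp\big(z \cdot \overline{w} - \frac{e^{-t}|z-w|^2}{1-e^{-t}} - |w|^2\big)$, viewed as a function of $(t,z)$, satisfies the evolution equation $\partial_t K_t(\cdot, w) = L K_t(\cdot, w)$, where $L f = \sum_{j=1}^n \big(\partial^2_{z_j \overline{z_j}} f - \overline{z_j} \, \partial_{\overline{z_j}} f\big)$. -/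
open MeasureTheory Complex

noncomputable section
def Pc {n : ℕ} (k : Fin n) : (Fin n → ℂ) →L[ℝ] ℂ :=
  (ContinuousLinearMap.proj k : (Fin n → ℂ) →L[ℝ] ℂ)
def Qc {n : ℕ} (k : Fin n) : (Fin n → ℂ) →L[ℝ] ℂ :=
  (Complex.conjCLE.toContinuousLinearMap).comp (Pc k)
def DKc {n : ℕ} (w : Fin n → ℂ) (A : ℂ) (z : Fin n → ℂ) : (Fin n → ℂ) →L[ℝ] ℂ :=
  ∑ k, (starRingEnd ℂ) (w k) • Pc k
    - A • ∑ k, ((z k - w k) • Qc k + (starRingEnd ℂ) (z k - w k) • Pc k)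

lemma DKc_apply {n : ℕ} (w : Fin n → ℂ) (A : ℂ) (z v : Fin n → ℂ) :
    DKc w A z v = ∑ k, (starRingEnd ℂ) (w k) * v k
      - A * ∑ k, ((z k - w k) * (starRingEnd ℂ) (v k) + (starRingEnd ℂ) (z k - w k) * v k) := by
  simp [DKc, Pc, Qc, ContinuousLinearMap.sum_apply, smul_eq_mul]

lemma enorm_sq_cast {n : ℕ} (u : Fin n → ℂ) :
    (((enorm' u)^2 : ℝ) : ℂ) = ∑ j, u j * (starRingEnd ℂ) (u j) := by
  have h : (enorm' u)^2 = ∑ j, Complex.normSq (u j) :=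
    Real.sq_sqrt (Finset.sum_nonneg fun j _ => Complex.normSq_nonneg _)
  rw [h]
  push_cast
  simp [Complex.mul_conj]

lemma hasFDerivAt_Kker {n : ℕ} (w : Fin n → ℂ) (t : ℝ) (z : Fin n → ℂ) :
    HasFDerivAt (fun y => Kker t y w)
      (Kker t z w • DKc w ((Real.exp (-t) / (1 - Real.exp (-t)) : ℝ) : ℂ) z) z := by
  set A : ℂ := ((Real.exp (-t) / (1 - Real.exp (-t)) : ℝ) : ℂ) with hA
  set Cc : ℂ := ((Real.pi ^ (-(n:ℤ)) * (1 - Real.exp (-t)) ^ (-(n:ℤ)) : ℝ) : ℂ) with hCc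
  set ψ : (Fin n → ℂ) → ℂ := fun y =>
    (∑ k, (starRingEnd ℂ) (w k) * y k)
      - A * (∑ k, (y k - w k) * (starRingEnd ℂ) (y k - w k))
      - (((enorm' w)^2 : ℝ) : ℂ) with hψdef
  have hKeq : (fun y => Kker t y w) = fun y => Cc * Complex.exp (ψ y) := by
    funext y
    have e1 : dotC y (confj w) = ∑ k, (starRingEnd ℂ) (w k) * y k := by
      simp [dotC, confj, mul_comm]
    have e2 : (((enorm' (y - w))^2 : ℝ) : ℂ) = ∑ k, (y k - w k) * (starRingEnd ℂ) (y k - w k) := by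
      rw [enorm_sq_cast]
      simp [Pi.sub_apply]
    simp only [Kker, hψdef, e1, e2, hA, hCc]
  have hQ : ∀ k : Fin n, HasFDerivAt (fun y : Fin n → ℂ => (starRingEnd ℂ) (y k - w k)) (Qc k) z := by
    intro k
    have h1 : HasFDerivAt (fun y : Fin n → ℂ => y k - w k) (Pc k) z :=
      (Pc k).hasFDerivAt.sub_const (w k)
    exact (Complex.conjCLE.toContinuousLinearMap.hasFDerivAt.comp z h1 : _)
  have h1 : HasFDerivAt (fun y : Fin n → ℂ => ∑ k, (starRingEnd ℂ) (w k) * y k)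
      (∑ k, (starRingEnd ℂ) (w k) • Pc k) z :=
    HasFDerivAt.fun_sum fun k _ => (Pc k).hasFDerivAt.const_mul _
  have h2 : HasFDerivAt (fun y : Fin n → ℂ => ∑ k, (y k - w k) * (starRingEnd ℂ) (y k - w k))
      (∑ k, ((z k - w k) • Qc k + (starRingEnd ℂ) (z k - w k) • Pc k)) z :=
    HasFDerivAt.fun_sum fun k _ => ((Pc k).hasFDerivAt.sub_const (w k)).fun_mul (hQ k)
  have hψ : HasFDerivAt ψ (DKc w A z) z :=
    ((h1.sub (h2.const_mul A)).sub_const _)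
  have hexp := (Complex.hasDerivAt_exp (ψ z)).comp_hasFDerivAt z hψ
  have hfull := hexp.const_mul Cc
  rw [hKeq]
  refine hfull.congr_fderiv ?_
  rw [smul_smul]
  congr 1
  exact (congrFun hKeq z).symm


lemma pder_Kker {n : ℕ} (w : Fin n → ℂ) (t : ℝ) (z v : Fin n → ℂ) :
    pder v (fun y => Kker t y w) z
      = Kker t z w * DKc w ((Real.exp (-t) / (1 - Real.exp (-t)) : ℝ) : ℂ) z v := by
  unfold pder
  rw [(hasFDerivAt_Kker w t z).fderiv]
  simp [smul_eq_mul]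

lemma DKc_single {n : ℕ} (w : Fin n → ℂ) (A : ℂ) (z : Fin n → ℂ) (j : Fin n) (a : ℂ) :
    DKc w A z (Pi.single j a) = (starRingEnd ℂ) (w j) * a
      - A * ((z j - w j) * (starRingEnd ℂ) a + (starRingEnd ℂ) (z j - w j) * a) := by
  rw [DKc_apply]
  rw [Finset.sum_eq_single j (fun k _ hk => by simp [Pi.single_eq_of_ne hk]) (by simp),
      Finset.sum_eq_single j (fun k _ hk => by simp [Pi.single_eq_of_ne hk]) (by simp)]
  simp

lemma wdzbar_Kker {n : ℕ} (w : Fin n → ℂ) (t : ℝ) (z : Fin n → ℂ) (j : Fin n) :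
    wdzbar j (fun y => Kker t y w) z
      = -((Real.exp (-t) / (1 - Real.exp (-t)) : ℝ) : ℂ) * (z j - w j) * Kker t z w := by
  unfold wdzbar
  rw [pder_Kker, pder_Kker, DKc_single, DKc_single]
  set A : ℂ := ((Real.exp (-t) / (1 - Real.exp (-t)) : ℝ) : ℂ)
  set K : ℂ := Kker t z w
  simp only [map_one, Complex.conj_I, mul_one]
  linear_combination ((1/2) * K * ((starRingEnd ℂ) (w j) + A * (z j - w j)
    - A * (starRingEnd ℂ) (z j - w j))) * Complex.I_mul_I

lemma pder_wdzbar_Kker {n : ℕ} (w : Fin n → ℂ) (t : ℝ) (z v : Fin n → ℂ) (j : Fin n) :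
    pder v (wdzbar j (fun y => Kker t y w)) z
      = (-((Real.exp (-t) / (1 - Real.exp (-t)) : ℝ) : ℂ) * (z j - w j))
          * (Kker t z w * DKc w ((Real.exp (-t) / (1 - Real.exp (-t)) : ℝ) : ℂ) z v)
        + Kker t z w * (-((Real.exp (-t) / (1 - Real.exp (-t)) : ℝ) : ℂ) * v j) := by
  set A : ℂ := ((Real.exp (-t) / (1 - Real.exp (-t)) : ℝ) : ℂ) with hA
  have he : wdzbar j (fun y => Kker t y w)
      = fun y => -A * (y j - w j) * Kker t y w := funext fun y => wdzbar_Kker w t y j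
  rw [he]
  unfold pder
  have hlin : HasFDerivAt (fun y : Fin n → ℂ => -A * (y j - w j)) ((-A) • Pc j) z :=
    ((Pc j).hasFDerivAt.sub_const (w j)).const_mul (-A)
  have hg := hlin.fun_mul (hasFDerivAt_Kker w t z)
  rw [hg.fderiv]
  simp only [ContinuousLinearMap.add_apply, ContinuousLinearMap.coe_smul', Pi.smul_apply,
    smul_eq_mul, Pc, ContinuousLinearMap.proj_apply]
  rfl

lemma wdz_wdzbar_Kker {n : ℕ} (w : Fin n → ℂ) (t : ℝ) (z : Fin n → ℂ) (j : Fin n) :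
    wdz j (wdzbar j (fun y => Kker t y w)) z
      = -((Real.exp (-t) / (1 - Real.exp (-t)) : ℝ) : ℂ) * Kker t z w
        + (-((Real.exp (-t) / (1 - Real.exp (-t)) : ℝ) : ℂ) * (z j - w j))
          * ((starRingEnd ℂ) (w j)
            - ((Real.exp (-t) / (1 - Real.exp (-t)) : ℝ) : ℂ) * (starRingEnd ℂ) (z j - w j))
          * Kker t z w := by
  unfold wdz
  rw [pder_wdzbar_Kker, pder_wdzbar_Kker, DKc_single, DKc_single]
  set A : ℂ := ((Real.exp (-t) / (1 - Real.exp (-t)) : ℝ) : ℂ)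
  set K : ℂ := Kker t z w
  simp only [map_one, Complex.conj_I, mul_one, Pi.single_eq_same]
  ring_nf
  simp only [Complex.I_sq]
  try ring

lemma Lop_Kker {n : ℕ} (w : Fin n → ℂ) (t : ℝ) (z : Fin n → ℂ) :
    Lop (fun y => Kker t y w) z
      = (-(n:ℂ) * ((Real.exp (-t) / (1 - Real.exp (-t)) : ℝ) : ℂ)
         + (((Real.exp (-t) / (1 - Real.exp (-t)) : ℝ) : ℂ)
            + ((Real.exp (-t) / (1 - Real.exp (-t)) : ℝ) : ℂ)^2)
            * (((enorm' (z - w))^2 : ℝ) : ℂ)) * Kker t z w := by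
  set A : ℂ := ((Real.exp (-t) / (1 - Real.exp (-t)) : ℝ) : ℂ) with hA
  set K : ℂ := Kker t z w with hK
  have hS : (((enorm' (z - w))^2 : ℝ) : ℂ)
      = ∑ j, (z j - w j) * (starRingEnd ℂ) (z j - w j) := by
    rw [enorm_sq_cast]
    simp [Pi.sub_apply]
  have hj : ∀ j : Fin n, wdz j (wdzbar j (fun y => Kker t y w)) z
      - (starRingEnd ℂ) (z j) * wdzbar j (fun y => Kker t y w) z
      = -A * K + (A + A^2) * ((z j - w j) * (starRingEnd ℂ) (z j - w j)) * K := by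
    intro j
    rw [wdz_wdzbar_Kker, wdzbar_Kker, map_sub]
    ring
  rw [Lop, Finset.sum_congr rfl fun j _ => hj j, hS, Finset.sum_add_distrib,
    Finset.sum_const, Finset.card_univ, Fintype.card_fin, ← Finset.sum_mul, ← Finset.mul_sum,
    nsmul_eq_mul]
  ring

lemma deriv_Kker {n : ℕ} (w : Fin n → ℂ) (t : ℝ) (ht : 0 < t) (z : Fin n → ℂ) :
    deriv (fun τ => Kker τ z w) t
      = (-(n:ℂ) * ((Real.exp (-t) / (1 - Real.exp (-t)) : ℝ) : ℂ)
         + (((Real.exp (-t) / (1 - Real.exp (-t)) : ℝ) : ℂ)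
            + ((Real.exp (-t) / (1 - Real.exp (-t)) : ℝ) : ℂ)^2)
            * (((enorm' (z - w))^2 : ℝ) : ℂ)) * Kker t z w := by
  have hu : 0 < 1 - Real.exp (-t) := by
    have : Real.exp (-t) < 1 := Real.exp_lt_one_iff.mpr (by linarith)
    linarith
  set r : ℝ := Real.exp (-t) with hrdef
  have hr : HasDerivAt (fun τ : ℝ => Real.exp (-τ)) (-r) t := by
    simpa [Function.comp_def] using (Real.hasDerivAt_exp (-t)).comp t (hasDerivAt_neg t)
  have hu' : HasDerivAt (fun τ : ℝ => 1 - Real.exp (-τ)) r t := by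
    simpa using (hasDerivAt_const t (1:ℝ)).fun_sub hr
  have hc1 : HasDerivAt (fun τ : ℝ => (1 - Real.exp (-τ)) ^ (-(n:ℤ)))
      (((-(n:ℤ)) : ℝ) * (1 - r) ^ (-(n:ℤ) - 1) * r) t := by
    simpa [Function.comp_def] using (hasDerivAt_zpow (-(n:ℤ)) (1 - r) (Or.inl hu.ne')).comp t hu'
  have ha : HasDerivAt (fun τ : ℝ => Real.exp (-τ) / (1 - Real.exp (-τ)))
      ((-r * (1 - r) - r * r) / (1 - r)^2) t := by
    simpa using hr.fun_div hu' hu.ne'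
  have hCd : HasDerivAt
      (fun τ : ℝ => ((Real.pi ^ (-(n:ℤ)) * (1 - Real.exp (-τ)) ^ (-(n:ℤ)) : ℝ) : ℂ))
      ((Real.pi ^ (-(n:ℤ)) * (((-(n:ℤ)) : ℝ) * (1 - r) ^ (-(n:ℤ) - 1) * r) : ℝ) : ℂ) t :=
    (hc1.const_mul _).ofReal_comp
  have haC : HasDerivAt (fun τ : ℝ => ((Real.exp (-τ) / (1 - Real.exp (-τ)) : ℝ) : ℂ))
      (((-r * (1 - r) - r * r) / (1 - r)^2 : ℝ) : ℂ) t := ha.ofReal_comp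
  set Sr : ℂ := (((enorm' (z - w))^2 : ℝ) : ℂ) with hSr
  set D0 : ℂ := dotC z (confj w) with hD0
  set B : ℂ := (((enorm' w)^2 : ℝ) : ℂ) with hB
  have hG : HasDerivAt
      (fun τ : ℝ => D0 - ((Real.exp (-τ) / (1 - Real.exp (-τ)) : ℝ) : ℂ) * Sr - B)
      (-((((-r * (1 - r) - r * r) / (1 - r)^2 : ℝ) : ℂ) * Sr)) t := by
    simpa using ((haC.mul_const Sr).const_sub D0).sub_const B
  have hE : HasDerivAt
      (fun τ : ℝ => Complex.exp (D0 - ((Real.exp (-τ) / (1 - Real.exp (-τ)) : ℝ) : ℂ) * Sr - B))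
      (Complex.exp (D0 - ((r / (1 - r) : ℝ) : ℂ) * Sr - B)
        * (-((((-r * (1 - r) - r * r) / (1 - r)^2 : ℝ) : ℂ) * Sr))) t := by
    simpa [Function.comp_def] using
      (Complex.hasDerivAt_exp (D0 - ((r / (1 - r) : ℝ) : ℂ) * Sr - B)).comp t hG
  have hKd := hCd.fun_mul hE
  have hfun : (fun τ => Kker τ z w) = fun τ : ℝ =>
      ((Real.pi ^ (-(n:ℤ)) * (1 - Real.exp (-τ)) ^ (-(n:ℤ)) : ℝ) : ℂ) *
        Complex.exp (D0 - ((Real.exp (-τ) / (1 - Real.exp (-τ)) : ℝ) : ℂ) * Sr - B) := rfl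
  rw [hfun, hKd.deriv, Kker, ← hrdef, ← hD0, ← hSr, ← hB]
  have e1 : Real.pi ^ (-(n:ℤ)) * (((-(n:ℤ)) : ℝ) * (1 - r) ^ (-(n:ℤ) - 1) * r)
      = (-(n:ℝ)) * (r / (1 - r)) * (Real.pi ^ (-(n:ℤ)) * (1 - r) ^ (-(n:ℤ))) := by
    rw [zpow_sub_one₀ hu.ne']
    field_simp
    try ring
    try simp
    ring
  have e2 : ((-r * (1 - r) - r * r) / (1 - r)^2) = -(r / (1 - r) + (r / (1 - r))^2) := by
    field_simp
    ring
  rw [e1, e2]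
  push_cast [Complex.ofReal_zpow]
  ring

end

theorem kernel_evolution_equation (n : ℕ) (w : Fin n → ℂ) (t : ℝ) (ht : 0 < t)
    (z : Fin n → ℂ) :
    deriv (fun τ => Kker τ z w) t = Lop (fun y => Kker t y w) z := by
  rw [deriv_Kker w t ht z, Lop_Kker w t z]
end

section
/- Let $P_t f(z) = \int f(z + \sqrt{1-e^{-t}}\,\xi) e^{-\sqrt{1-e^{-t}}\,\overline{z}\cdot\xi} \, d\gamma(\xi)$. If $F : \mathbb{C}^n \to \mathbb{C}$ is holomorphic and in $L^2(\gamma)$, then $P_t F = F$ for all $t \ge 0$ (i.e., $P_t$ acts as the identity on holomorphic functions). -/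
open MeasureTheory Complex

namespace PtAux

open MeasureTheory Complex
open scoped ENNReal NNReal

noncomputable section

variable {n : ℕ}

/-! ### Basic facts about `enorm'` -/

lemma enorm'_nonneg (w : Fin n → ℂ) : 0 ≤ enorm' w := Real.sqrt_nonneg _

lemma enorm'_sq (w : Fin n → ℂ) : (enorm' w)^2 = ∑ j, Complex.normSq (w j) :=
  Real.sq_sqrt (Finset.sum_nonneg fun _ _ => Complex.normSq_nonneg _)

lemma enorm'_eq_norm (w : Fin n → ℂ) :
    enorm' w = ‖(WithLp.equiv 2 (Fin n → ℂ)).symm w‖ := by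
  rw [EuclideanSpace.norm_eq]
  unfold enorm'
  congr 1
  refine Finset.sum_congr rfl fun j _ => ?_
  exact (Complex.sq_norm (w j)).symm

lemma enorm'_add_le (v w : Fin n → ℂ) : enorm' (v + w) ≤ enorm' v + enorm' w := by
  simp only [enorm'_eq_norm]
  rw [show (WithLp.equiv 2 (Fin n → ℂ)).symm (v + w)
      = (WithLp.equiv 2 (Fin n → ℂ)).symm v + (WithLp.equiv 2 (Fin n → ℂ)).symm w from rfl]
  exact norm_add_le _ _

lemma enorm'_smul (s : ℝ) (w : Fin n → ℂ) : enorm' (s • w) = |s| * enorm' w := by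
  simp only [enorm'_eq_norm]
  rw [show (WithLp.equiv 2 (Fin n → ℂ)).symm (s • w)
      = s • (WithLp.equiv 2 (Fin n → ℂ)).symm w from rfl]
  rw [norm_smul, Real.norm_eq_abs]

lemma continuous_enorm' : Continuous (enorm' (n := n)) := by
  unfold enorm'
  exact (continuous_finset_sum _ fun j _ =>
    Complex.continuous_normSq.comp (continuous_apply j)).sqrt

lemma abs_apply_le (w : Fin n → ℂ) (j : Fin n) : ‖w j‖ ≤ enorm' w := by
  rw [← Real.sqrt_sq (norm_nonneg (w j))]
  apply Real.sqrt_le_sqrt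
  rw [Complex.sq_norm]
  exact Finset.single_le_sum (f := fun j => Complex.normSq (w j))
    (fun j _ => Complex.normSq_nonneg _) (Finset.mem_univ j)

/-! ### Gaussian integrals -/

lemma key_exp (b : ℝ) (w : ℂ) :
    Real.exp (-b * (Complex.measurableEquivRealProd w).1 ^ 2) *
      Real.exp (-b * (Complex.measurableEquivRealProd w).2 ^ 2)
      = Real.exp (-b * Complex.normSq w) := by
  rw [← Real.exp_add]
  congr 1
  have h1 : (Complex.measurableEquivRealProd w).1 = w.re := rfl
  have h2 : (Complex.measurableEquivRealProd w).2 = w.im := rfl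
  rw [h1, h2, Complex.normSq_apply]
  ring

lemma integrable_gaussC {b : ℝ} (hb : 0 < b) :
    Integrable (fun w : ℂ => Real.exp (-b * Complex.normSq w)) := by
  have hg : Integrable (fun p : ℝ × ℝ => Real.exp (-b * p.1 ^ 2) * Real.exp (-b * p.2 ^ 2)) :=
    (integrable_exp_neg_mul_sq hb).mul_prod (integrable_exp_neg_mul_sq hb)
  have := (Complex.volume_preserving_equiv_real_prod.integrable_comp
    hg.aestronglyMeasurable).mpr hg
  exact this.congr (Filter.Eventually.of_forall fun w => key_exp b w)

lemma integral_gaussC {b : ℝ} (hb : 0 < b) :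
    ∫ w : ℂ, Real.exp (-b * Complex.normSq w) = Real.pi / b := by
  calc ∫ w : ℂ, Real.exp (-b * Complex.normSq w)
      = ∫ w : ℂ, Real.exp (-b * (Complex.measurableEquivRealProd w).1 ^ 2) *
          Real.exp (-b * (Complex.measurableEquivRealProd w).2 ^ 2) :=
        (MeasureTheory.integral_congr_ae (Filter.Eventually.of_forall
          fun w => (key_exp b w))).symm
    _ = ∫ p : ℝ × ℝ, Real.exp (-b * p.1 ^ 2) * Real.exp (-b * p.2 ^ 2) :=
        Complex.volume_preserving_equiv_real_prod.integral_comp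
          Complex.measurableEquivRealProd.measurableEmbedding
          (fun p : ℝ × ℝ => Real.exp (-b * p.1 ^ 2) * Real.exp (-b * p.2 ^ 2))
    _ = (∫ x : ℝ, Real.exp (-b * x ^ 2)) * ∫ x : ℝ, Real.exp (-b * x ^ 2) :=
        MeasureTheory.integral_prod_mul (fun x : ℝ => Real.exp (-b * x ^ 2))
          (fun x : ℝ => Real.exp (-b * x ^ 2))
    _ = Real.pi / b := by
        rw [integral_gaussian, Real.mul_self_sqrt (by positivity)]

lemma gauss_prod (b : ℝ) (w : Fin n → ℂ) :
    Real.exp (-b * (enorm' w)^2) = ∏ j, Real.exp (-b * Complex.normSq (w j)) := by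
  rw [enorm'_sq, ← Real.exp_sum]
  congr 1
  rw [Finset.mul_sum]

lemma integrable_gaussPi {b : ℝ} (hb : 0 < b) :
    Integrable (fun w : Fin n → ℂ => Real.exp (-b * (enorm' w)^2)) := by
  have : Integrable (fun w : Fin n → ℂ => ∏ j, Real.exp (-b * Complex.normSq (w j))) :=
    Integrable.fintype_prod (f := fun (_ : Fin n) (x : ℂ) => Real.exp (-b * Complex.normSq x))
      (fun _ => integrable_gaussC hb)
  exact this.congr (Filter.Eventually.of_forall fun w => (gauss_prod b w).symm)

lemma integral_gaussPi {b : ℝ} (hb : 0 < b) :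
    ∫ w : Fin n → ℂ, Real.exp (-b * (enorm' w)^2) = (Real.pi / b) ^ n := by
  calc ∫ w : Fin n → ℂ, Real.exp (-b * (enorm' w)^2)
      = ∫ w : Fin n → ℂ, ∏ j, Real.exp (-b * Complex.normSq (w j)) :=
        MeasureTheory.integral_congr_ae (Filter.Eventually.of_forall fun w => gauss_prod b w)
    _ = (∫ x : ℂ, Real.exp (-b * Complex.normSq x)) ^ (Fintype.card (Fin n)) :=
        MeasureTheory.integral_fintype_prod_eq_pow
          (fun x : ℂ => Real.exp (-b * Complex.normSq x))
    _ = (Real.pi / b) ^ n := by rw [integral_gaussC hb, Fintype.card_fin]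

/-! ### The density -/

def densR (n : ℕ) (w : Fin n → ℂ) : ℝ := Real.pi ^ (-(n:ℤ)) * Real.exp (-(enorm' w)^2)

lemma densR_pos (w : Fin n → ℂ) : 0 < densR n w := by
  unfold densR; positivity

lemma continuous_densR : Continuous (densR n) :=
  continuous_const.mul (((continuous_enorm'.pow 2).neg).rexp)

lemma gaussianC_eq : gaussianC n = volume.withDensity (fun w => ENNReal.ofReal (densR n w)) :=
  rfl

lemma densR_eq_gauss (w : Fin n → ℂ) :
    densR n w = Real.pi ^ (-(n:ℤ)) * Real.exp (-1 * (enorm' w)^2) := by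
  unfold densR; rw [neg_one_mul]

lemma integrable_densR : Integrable (densR n) := by
  have := (integrable_gaussPi (n := n) (b := 1) one_pos).const_mul (Real.pi ^ (-(n:ℤ)))
  exact this.congr (Filter.Eventually.of_forall fun w => (densR_eq_gauss w).symm)

lemma integral_densR : ∫ w : Fin n → ℂ, densR n w = 1 := by
  have : ∫ w : Fin n → ℂ, densR n w
      = Real.pi ^ (-(n:ℤ)) * ∫ w : Fin n → ℂ, Real.exp (-1 * (enorm' w)^2) := by
    rw [← MeasureTheory.integral_const_mul]
    exact MeasureTheory.integral_congr_ae (Filter.Eventually.of_forall fun w => densR_eq_gauss w)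
  rw [this, integral_gaussPi one_pos, div_one, zpow_neg, zpow_natCast]
  exact inv_mul_cancel₀ (pow_ne_zero _ (ne_of_gt Real.pi_pos))

lemma gaussianC_prob : IsProbabilityMeasure (gaussianC n) := by
  constructor
  rw [gaussianC_eq, withDensity_apply _ MeasurableSet.univ, setLIntegral_univ]
  rw [← MeasureTheory.ofReal_integral_eq_lintegral_ofReal integrable_densR
    (Filter.Eventually.of_forall fun w => (densR_pos w).le)]
  rw [integral_densR, ENNReal.ofReal_one]

/-! ### Rotation invariance -/

lemma rot_volume_mp (a : Circle) :
    MeasurePreserving (fun w : Fin n → ℂ => (a : ℂ) • w)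
      (volume : Measure (Fin n → ℂ)) volume := by
  have h := MeasureTheory.volume_preserving_pi
    (f := fun _ : Fin n => fun z : ℂ => _root_.rotation a z)
    (fun _ => (_root_.rotation a).measurePreserving)
  exact h

lemma enorm'_rot (a : Circle) (w : Fin n → ℂ) : enorm' ((a : ℂ) • w) = enorm' w := by
  unfold enorm'
  congr 1
  refine Finset.sum_congr rfl fun j _ => ?_
  have : ((a : ℂ) • w) j = (a : ℂ) * w j := rfl
  rw [this, Complex.normSq_mul]
  have : Complex.normSq (a : ℂ) = 1 := by
    rw [← Complex.sq_norm, Circle.norm_coe, one_pow]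
  rw [this, one_mul]

lemma densR_rot (a : Circle) (w : Fin n → ℂ) : densR n ((a : ℂ) • w) = densR n w := by
  unfold densR; rw [enorm'_rot]

lemma measurable_densE : Measurable (fun w : Fin n → ℂ => ENNReal.ofReal (densR n w)) :=
  (ENNReal.measurable_ofReal).comp continuous_densR.measurable

lemma rot_gauss_mp (a : Circle) :
    MeasurePreserving (fun w : Fin n → ℂ => (a : ℂ) • w) (gaussianC n) (gaussianC n) := by
  have hmeas : Measurable (fun w : Fin n → ℂ => (a : ℂ) • w) :=
    (continuous_const_smul ((a : ℂ))).measurable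
  refine ⟨hmeas, ?_⟩
  ext s hs
  rw [Measure.map_apply hmeas hs, gaussianC_eq, withDensity_apply _ (hmeas hs),
    withDensity_apply _ hs]
  have hfun : (fun w : Fin n → ℂ => ENNReal.ofReal (densR n ((a : ℂ) • w)))
      = fun w => ENNReal.ofReal (densR n w) := funext fun w => by rw [densR_rot]
  calc ∫⁻ w in (fun w : Fin n → ℂ => (a : ℂ) • w) ⁻¹' s, ENNReal.ofReal (densR n w) ∂volume
      = ∫⁻ w in (fun w : Fin n → ℂ => (a : ℂ) • w) ⁻¹' s,
          ENNReal.ofReal (densR n ((a : ℂ) • w)) ∂volume := by rw [hfun]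
    _ = ∫⁻ w in s, ENNReal.ofReal (densR n w) ∂volume :=
        (rot_volume_mp a).setLIntegral_comp_preimage hs measurable_densE

lemma integral_rot {E : Type*} [NormedAddCommGroup E] [NormedSpace ℝ E]
    (a : Circle) {f : (Fin n → ℂ) → E}
    (hf : AEStronglyMeasurable f (gaussianC n)) :
    ∫ w, f ((a : ℂ) • w) ∂(gaussianC n) = ∫ w, f w ∂(gaussianC n) := by
  have h := (rot_gauss_mp (n := n) a)
  have hf' : AEStronglyMeasurable f (Measure.map (fun w : Fin n → ℂ => (a : ℂ) • w)
      (gaussianC n)) := by rw [h.map_eq]; exact hf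
  calc ∫ w, f ((a : ℂ) • w) ∂(gaussianC n)
      = ∫ y, f y ∂(Measure.map (fun w : Fin n → ℂ => (a : ℂ) • w) (gaussianC n)) :=
        (MeasureTheory.integral_map h.measurable.aemeasurable hf').symm
    _ = ∫ w, f w ∂(gaussianC n) := by rw [h.map_eq]

lemma integrable_rot (a : Circle) {f : (Fin n → ℂ) → ℂ}
    (hf : Integrable f (gaussianC n)) :
    Integrable (fun w => f ((a : ℂ) • w)) (gaussianC n) :=
  ((rot_gauss_mp (n := n) a).integrable_comp hf.aestronglyMeasurable).mpr hf

/-! ### Circle average of an entire function -/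

lemma circle_avg {g : ℂ → ℂ} (hg : Differentiable ℂ g) :
    ∫ θ in (0:ℝ)..(2 * Real.pi), g (Complex.exp (θ * Complex.I))
      = ((2 * Real.pi : ℝ) : ℂ) * g 0 := by
  have hd : DiffContOnCl ℂ g (Metric.ball (0:ℂ) 1) :=
    hg.diffContOnCl
  have h0 : (0:ℂ) ∈ Metric.ball (0:ℂ) 1 := by simp
  have key := hd.circleIntegral_sub_inv_smul h0
  rw [circleIntegral] at key
  simp only [deriv_circleMap, circleMap, ofReal_one, one_mul, zero_add, sub_zero,
    smul_eq_mul] at key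
  have hexp : ∀ θ : ℝ, Complex.exp (θ * Complex.I) * Complex.I *
      ((Complex.exp (θ * Complex.I))⁻¹ * g (Complex.exp (θ * Complex.I)))
      = Complex.I * g (Complex.exp (θ * Complex.I)) := by
    intro θ
    have hne : Complex.exp (θ * Complex.I) ≠ 0 := Complex.exp_ne_zero _
    field_simp
  rw [intervalIntegral.integral_congr (fun θ _ => hexp θ)] at key
  rw [intervalIntegral.integral_const_mul] at key
  have hI : (Complex.I : ℂ) ≠ 0 := Complex.I_ne_zero
  have := mul_left_cancel₀ hI (by
    rw [key]; push_cast; ring : Complex.I * ∫ θ in (0:ℝ)..(2 * Real.pi),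
      g (Complex.exp (θ * Complex.I)) = Complex.I * (((2 * Real.pi : ℝ) : ℂ) * g 0))
  exact this

/-! ### Mean value property -/

lemma mean_value {h : (Fin n → ℂ) → ℂ} (hd : Differentiable ℂ h)
    (hi : Integrable h (gaussianC n)) : ∫ ξ, h ξ ∂(gaussianC n) = h 0 := by
  haveI : IsProbabilityMeasure (gaussianC n) := gaussianC_prob
  have hcont : Continuous h := hd.continuous
  have hcoe : ∀ θ : ℝ, ((Circle.exp θ : Circle) : ℂ) = Complex.exp (θ * Complex.I) :=
    fun θ => Circle.coe_exp θ
  have h2π : (0:ℝ) < 2 * Real.pi := by positivity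
  have hrotInt : ∀ θ : ℝ, ∫ ξ, h (Complex.exp (θ * Complex.I) • ξ) ∂(gaussianC n)
      = ∫ ξ, h ξ ∂(gaussianC n) := by
    intro θ
    have := integral_rot (n := n) (Circle.exp θ) (f := h) hcont.aestronglyMeasurable
    rwa [hcoe θ] at this
  have hrotIntg : ∀ θ : ℝ, Integrable (fun ξ => h (Complex.exp (θ * Complex.I) • ξ))
      (gaussianC n) := by
    intro θ
    have := integrable_rot (n := n) (Circle.exp θ) hi
    rwa [hcoe θ] at this
  have hnormInt : ∀ θ : ℝ, ∫ ξ, ‖h (Complex.exp (θ * Complex.I) • ξ)‖ ∂(gaussianC n)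
      = ∫ ξ, ‖h ξ‖ ∂(gaussianC n) := by
    intro θ
    have := integral_rot (n := n) (Circle.exp θ) (f := fun w => ‖h w‖)
      hcont.norm.aestronglyMeasurable
    rwa [hcoe θ] at this
  set μ := volume.restrict (Set.Ioc (0:ℝ) (2 * Real.pi)) with hμ
  haveI : IsFiniteMeasure μ := by
    constructor
    rw [hμ, Measure.restrict_apply_univ, Real.volume_Ioc]
    exact ENNReal.ofReal_lt_top
  have hΦcont : Continuous (fun p : ℝ × (Fin n → ℂ) => h (Complex.exp ((p.1 : ℂ) * Complex.I) • p.2)) :=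
    hcont.comp ((((Complex.continuous_ofReal.comp continuous_fst).mul
      continuous_const).cexp).smul continuous_snd)
  have hprodInt : Integrable (fun p : ℝ × (Fin n → ℂ) =>
      h (Complex.exp ((p.1 : ℂ) * Complex.I) • p.2)) (μ.prod (gaussianC n)) := by
    rw [MeasureTheory.integrable_prod_iff hΦcont.aestronglyMeasurable]
    refine ⟨Filter.Eventually.of_forall fun θ => hrotIntg θ, ?_⟩
    have : (fun θ : ℝ => ∫ ξ, ‖h (Complex.exp ((θ:ℂ) * Complex.I) • ξ)‖ ∂(gaussianC n))
        = fun _ : ℝ => ∫ ξ, ‖h ξ‖ ∂(gaussianC n) := funext fun θ => hnormInt θ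
    rw [this]
    exact integrable_const _
  have swap := MeasureTheory.integral_integral_swap
    (f := fun (θ : ℝ) (ξ : Fin n → ℂ) => h (Complex.exp ((θ:ℂ) * Complex.I) • ξ)) hprodInt
  have lhs : ∫ θ, (∫ ξ, h (Complex.exp ((θ:ℂ) * Complex.I) • ξ) ∂(gaussianC n)) ∂μ
      = (2 * Real.pi) • ∫ ξ, h ξ ∂(gaussianC n) := by
    have : (fun θ : ℝ => ∫ ξ, h (Complex.exp ((θ:ℂ) * Complex.I) • ξ) ∂(gaussianC n))
        = fun _ : ℝ => ∫ ξ, h ξ ∂(gaussianC n) := funext fun θ => hrotInt θ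
    rw [this, MeasureTheory.integral_const, hμ, measureReal_def, Measure.restrict_apply_univ, Real.volume_Ioc,
      sub_zero, ENNReal.toReal_ofReal h2π.le]
  have rhs : ∫ ξ, (∫ θ, h (Complex.exp ((θ:ℂ) * Complex.I) • ξ) ∂μ) ∂(gaussianC n)
      = (2 * Real.pi) • h 0 := by
    have hinner : ∀ ξ : Fin n → ℂ, ∫ θ, h (Complex.exp ((θ:ℂ) * Complex.I) • ξ) ∂μ
        = (2 * Real.pi) • h 0 := by
      intro ξ
      have hgd : Differentiable ℂ (fun u : ℂ => h (u • ξ)) :=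
        hd.comp (differentiable_id.smul_const ξ)
      have havg := circle_avg hgd
      rw [zero_smul] at havg
      rw [hμ, ← intervalIntegral.integral_of_le h2π.le, havg]
      rw [Complex.real_smul]
    have : (fun ξ : Fin n → ℂ => ∫ θ, h (Complex.exp ((θ:ℂ) * Complex.I) • ξ) ∂μ)
        = fun _ => (2 * Real.pi) • h 0 := funext hinner
    rw [this, MeasureTheory.integral_const, measureReal_def, measure_univ, ENNReal.toReal_one, one_smul]
  have heq : (2 * Real.pi) • ∫ ξ, h ξ ∂(gaussianC n) = (2 * Real.pi) • h 0 := by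
    rw [← lhs, ← rhs, swap]
  exact smul_right_injective ℂ (ne_of_gt h2π) heq

/-! ### Integrability of the kernel -/

lemma integrable_G' {F : (Fin n → ℂ) → ℂ} (hFc : Continuous F)
    (hL2 : MemLp F 2 (gaussianC n)) :
    Integrable (fun w : Fin n → ℂ => ‖F w‖^2 * Real.exp (-(enorm' w)^2)) volume := by
  have h1 : Integrable (fun w => ‖F w‖^2) (gaussianC n) :=
    (memLp_two_iff_integrable_sq_norm (hFc.aestronglyMeasurable)).mp hL2
  rw [gaussianC_eq] at h1
  have h2 := (integrable_withDensity_iff measurable_densE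
    (Filter.Eventually.of_forall fun w => ENNReal.ofReal_lt_top)).mp h1
  have h3 : Integrable (fun w : Fin n → ℂ => ‖F w‖^2 * densR n w) volume := by
    refine h2.congr (Filter.Eventually.of_forall fun w => ?_)
    show ‖F w‖^2 * (ENNReal.ofReal (densR n w)).toReal = ‖F w‖^2 * densR n w
    rw [ENNReal.toReal_ofReal (densR_pos w).le]
  have h4 := h3.const_mul (Real.pi ^ (n : ℕ))
  refine h4.congr (Filter.Eventually.of_forall fun w => ?_)
  unfold densR
  have hππ : (Real.pi : ℝ) ^ (n : ℕ) * Real.pi ^ (-(n:ℤ)) = 1 := by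
    rw [zpow_neg, zpow_natCast]
    exact mul_inv_cancel₀ (pow_ne_zero _ (ne_of_gt Real.pi_pos))
  calc Real.pi ^ (n:ℕ) * (‖F w‖^2 * (Real.pi ^ (-(n:ℤ)) * Real.exp (-(enorm' w)^2)))
      = (Real.pi ^ (n:ℕ) * Real.pi ^ (-(n:ℤ))) * (‖F w‖^2 * Real.exp (-(enorm' w)^2)) := by
        ring
    _ = ‖F w‖^2 * Real.exp (-(enorm' w)^2) := by rw [hππ, one_mul]

lemma integrable_comp_affine {G : (Fin n → ℂ) → ℝ} (hG : Integrable G volume)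
    (z : Fin n → ℂ) {s : ℝ} (hs : 0 < s) :
    Integrable (fun ξ : Fin n → ℂ => G (z + s • ξ)) volume := by
  have hsne : s ≠ 0 := hs.ne'
  let T₁ : (Fin n → ℂ) ≃ₜ (Fin n → ℂ) := Homeomorph.smulOfNeZero s hsne
  let T₂ : (Fin n → ℂ) ≃ₜ (Fin n → ℂ) := Homeomorph.addLeft z
  let T : (Fin n → ℂ) ≃ᵐ (Fin n → ℂ) := (T₁.trans T₂).toMeasurableEquiv
  have hTcoe : (T : (Fin n → ℂ) → (Fin n → ℂ)) = fun ξ => z + s • ξ := rfl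
  set c : ℝ≥0∞ := ENNReal.ofReal |(s ^ (Module.finrank ℝ (Fin n → ℂ)))⁻¹| with hc
  have hmap : Measure.map (T : (Fin n → ℂ) → (Fin n → ℂ)) volume = c • volume := by
    rw [hTcoe]
    have hcomp : (fun ξ : Fin n → ℂ => z + s • ξ)
        = (fun w : Fin n → ℂ => z + w) ∘ (fun ξ : Fin n → ℂ => s • ξ) := rfl
    rw [hcomp, ← Measure.map_map (measurable_const_add z)
      (measurable_const_smul s)]
    rw [MeasureTheory.Measure.map_addHaar_smul volume hsne, Measure.map_smul,
      MeasureTheory.map_add_left_eq_self volume z]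
  have hGc : Integrable G (Measure.map (T : (Fin n → ℂ) → (Fin n → ℂ)) volume) := by
    rw [hmap]
    refine (integrable_smul_measure ?_ ?_).mpr hG
    · simp only [hc, ne_eq, ENNReal.ofReal_eq_zero, not_le, abs_pos]
      positivity
    · exact ENNReal.ofReal_ne_top
  have := (T.measurableEmbedding.integrable_map_iff).mp hGc
  rw [hTcoe] at this
  exact this

lemma integrable_kernel {F : (Fin n → ℂ) → ℂ} (hFc : Continuous F)
    (hL2 : MemLp F 2 (gaussianC n)) (z : Fin n → ℂ) {s : ℝ}
    (hs0 : 0 ≤ s) (hs1 : s < 1) :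
    Integrable (fun ξ : Fin n → ℂ =>
      F (z + s • ξ) * Complex.exp (-(s:ℂ) * dotC (confj z) ξ)) (gaussianC n) := by
  haveI : IsProbabilityMeasure (gaussianC n) := gaussianC_prob
  -- continuity of the integrand
  have hdot : Continuous (fun ξ : Fin n → ℂ => dotC (confj z) ξ) := by
    unfold dotC
    exact continuous_finset_sum _ fun j _ => continuous_const.mul (continuous_apply j)
  have hker : Continuous (fun ξ : Fin n → ℂ =>
      F (z + s • ξ) * Complex.exp (-(s:ℂ) * dotC (confj z) ξ)) := by
    refine ((hFc.comp (continuous_const.add (continuous_const_smul s))).mul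
      ((continuous_const.mul hdot).cexp))
  rcases eq_or_lt_of_le hs0 with hs | hs
  · -- s = 0 : the integrand is constant
    have : (fun ξ : Fin n → ℂ =>
        F (z + s • ξ) * Complex.exp (-(s:ℂ) * dotC (confj z) ξ)) = fun _ => F z := by
      funext ξ
      rw [← hs]
      simp
    rw [this]
    exact integrable_const _
  · -- main case s > 0
    obtain ⟨a, ha⟩ : ∃ a : ℝ, a = enorm' z := ⟨_, rfl⟩
    obtain ⟨M, hM⟩ : ∃ M : ℝ, M = s * ∑ j, ‖z j‖ := ⟨_, rfl⟩
    obtain ⟨C, hC⟩ : ∃ C : ℝ, C = a^2 + (a*s)^2 / (1 - s^2) := ⟨_, rfl⟩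
    have hd : 0 < 1 - s^2 := by nlinarith
    obtain ⟨u, hu⟩ : ∃ u : (Fin n → ℂ) → ℝ,
        u = fun ξ => ‖F (z + s • ξ)‖ * Real.exp (-(enorm' ξ)^2 / 2) := ⟨_, rfl⟩
    obtain ⟨v, hv⟩ : ∃ v : (Fin n → ℂ) → ℝ,
        v = fun ξ => Real.pi ^ (-(n:ℤ)) * Real.exp (M * enorm' ξ - (enorm' ξ)^2 / 2) :=
      ⟨_, rfl⟩
    have hucont : Continuous u := by
      rw [hu]
      exact ((hFc.comp (continuous_const.add (continuous_const_smul s))).norm).mul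
        (((continuous_enorm'.pow 2).neg.div_const 2).rexp)
    have hvcont : Continuous v := by
      rw [hv]
      exact continuous_const.mul
        (((continuous_const.mul continuous_enorm').sub
          ((continuous_enorm'.pow 2).div_const 2)).rexp)
    -- MemLp v 2
    have hv2 : MemLp v 2 (volume : Measure (Fin n → ℂ)) := by
      rw [memLp_two_iff_integrable_sq hvcont.aestronglyMeasurable]
      have hbnd : Integrable (fun ξ : Fin n → ℂ =>
          (Real.pi ^ (-(n:ℤ)))^2 * Real.exp (2*M^2) * Real.exp (-(1/2) * (enorm' ξ)^2)) :=
        (integrable_gaussPi (by norm_num : (0:ℝ) < 1/2)).const_mul _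
      refine hbnd.mono' ((hvcont.pow 2).aestronglyMeasurable)
        (Filter.Eventually.of_forall fun ξ => ?_)
      have hval : v ξ ^ 2 = (Real.pi ^ (-(n:ℤ)))^2 *
          (Real.exp (M * enorm' ξ - (enorm' ξ)^2 / 2)
            * Real.exp (M * enorm' ξ - (enorm' ξ)^2 / 2)) := by
        rw [hv]; ring
      have hexp : Real.exp (M * enorm' ξ - (enorm' ξ)^2 / 2)
          * Real.exp (M * enorm' ξ - (enorm' ξ)^2 / 2)
          ≤ Real.exp (2*M^2) * Real.exp (-(1/2) * (enorm' ξ)^2) := by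
        rw [← Real.exp_add, ← Real.exp_add]
        apply Real.exp_le_exp.mpr
        nlinarith [sq_nonneg (enorm' ξ - 2*M)]
      have hnorm : ‖v ξ ^ 2‖ = v ξ ^ 2 := by
        rw [Real.norm_eq_abs, _root_.abs_of_nonneg (sq_nonneg _)]
      rw [hnorm, hval, mul_assoc]
      exact mul_le_mul_of_nonneg_left hexp (sq_nonneg _)
    -- MemLp u 2
    have hu2 : MemLp u 2 (volume : Measure (Fin n → ℂ)) := by
      rw [memLp_two_iff_integrable_sq hucont.aestronglyMeasurable]
      have hGint : Integrable (fun ξ : Fin n → ℂ =>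
          ‖F (z + s • ξ)‖^2 * Real.exp (-(enorm' (z + s • ξ))^2)) volume :=
        integrable_comp_affine (integrable_G' hFc hL2) z hs
      have hbnd := hGint.const_mul (Real.exp C)
      refine hbnd.mono' ((hucont.pow 2).aestronglyMeasurable)
        (Filter.Eventually.of_forall fun ξ => ?_)
      have hnorm : ‖u ξ ^ 2‖ = u ξ ^ 2 := by
        rw [Real.norm_eq_abs, _root_.abs_of_nonneg (sq_nonneg _)]
      have hval : u ξ ^ 2 = ‖F (z + s • ξ)‖^2 * Real.exp (-(enorm' ξ)^2) := by
        rw [hu, mul_pow, pow_two (Real.exp _), ← Real.exp_add]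
        have : -(enorm' ξ)^2/2 + -(enorm' ξ)^2/2 = -(enorm' ξ)^2 := by ring
        rw [this]
      -- key exponent estimate
      have htri : enorm' (z + s • ξ) ≤ a + s * enorm' ξ := by
        calc enorm' (z + s • ξ) ≤ enorm' z + enorm' (s • ξ) := enorm'_add_le _ _
          _ = a + s * enorm' ξ := by rw [enorm'_smul, _root_.abs_of_nonneg hs0, ← ha]
      have hsq : (enorm' (z + s • ξ))^2 ≤ (a + s * enorm' ξ)^2 :=
        pow_le_pow_left₀ (enorm'_nonneg _) htri 2
      have hexpineq : (enorm' (z + s • ξ))^2 - (enorm' ξ)^2 ≤ C := by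
        have hdiv : (a*s)^2 / (1 - s^2) * (1 - s^2) = (a*s)^2 :=
          div_mul_cancel₀ _ (ne_of_gt hd)
        have h2 : (a + s * enorm' ξ)^2 - (enorm' ξ)^2 ≤ C := by
          rw [hC]
          nlinarith [sq_nonneg ((1 - s^2) * enorm' ξ - a * s), hd, hdiv]
        linarith
      have hcore : Real.exp (-(enorm' ξ)^2)
          ≤ Real.exp C * Real.exp (-(enorm' (z + s • ξ))^2) := by
        rw [← Real.exp_add]
        apply Real.exp_le_exp.mpr
        linarith
      rw [hnorm, hval]
      calc ‖F (z + s • ξ)‖^2 * Real.exp (-(enorm' ξ)^2)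
          ≤ ‖F (z + s • ξ)‖^2 * (Real.exp C * Real.exp (-(enorm' (z + s • ξ))^2)) :=
            mul_le_mul_of_nonneg_left hcore (sq_nonneg _)
        _ = Real.exp C * (‖F (z + s • ξ)‖^2 * Real.exp (-(enorm' (z + s • ξ))^2)) := by ring
    -- Hölder: v * u is integrable
    have hvu : Integrable (fun ξ : Fin n → ℂ => v ξ * u ξ) volume := by
      have hone : (1:ℝ≥0∞)/1 = 1/2 + 1/2 := by
        rw [ENNReal.div_add_div_same, one_div_one, one_add_one_eq_two]
        exact (ENNReal.div_self two_ne_zero ENNReal.ofNat_ne_top).symm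
      have h5 : MemLp (v • u) 1 volume := hu2.smul hv2
      rw [memLp_one_iff_integrable] at h5
      exact h5.congr (Filter.Eventually.of_forall fun ξ => rfl)
    -- transfer to the Gaussian measure
    rw [gaussianC_eq, integrable_withDensity_iff_integrable_smul' measurable_densE
      (Filter.Eventually.of_forall fun w => ENNReal.ofReal_lt_top)]
    refine hvu.mono' ?_ (Filter.Eventually.of_forall fun ξ => ?_)
    · refine AEStronglyMeasurable.smul ?_ hker.aestronglyMeasurable
      exact (Complex.measurable_ofReal.comp (ENNReal.continuous_ofReal.comp
        (continuous_densR (n := n))).measurable.ennreal_toReal).aestronglyMeasurable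
    · -- pointwise bound
      have htoReal : (ENNReal.ofReal (densR n ξ)).toReal = densR n ξ :=
        ENNReal.toReal_ofReal (densR_pos ξ).le
      have hnorm1 : ‖densR n ξ • (F (z + s • ξ)
          * Complex.exp (-(s:ℂ) * dotC (confj z) ξ))‖
          = densR n ξ * (‖F (z + s • ξ)‖
            * Real.exp ((-(s:ℂ) * dotC (confj z) ξ).re)) := by
        rw [norm_smul, Real.norm_eq_abs, _root_.abs_of_nonneg (densR_pos ξ).le, norm_mul,
          Complex.norm_exp]
      -- bound the real part
      have hre : (-(s:ℂ) * dotC (confj z) ξ).re ≤ M * enorm' ξ := by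
        have h1 : (-(s:ℂ) * dotC (confj z) ξ).re
            ≤ ‖(-(s:ℂ) * dotC (confj z) ξ)‖ := Complex.re_le_norm _
        have h2 : ‖(-(s:ℂ) * dotC (confj z) ξ)‖
            = s * ‖(dotC (confj z) ξ)‖ := by
          rw [norm_mul, norm_neg, Complex.norm_real, Real.norm_of_nonneg hs0]
        have h3 : ‖(dotC (confj z) ξ)‖
            ≤ ∑ j, ‖(z j)‖ * ‖(ξ j)‖ := by
          unfold dotC confj
          refine (norm_sum_le _ _).trans ?_
          refine Finset.sum_le_sum fun j _ => ?_
          rw [norm_mul, Complex.norm_conj]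
        have h4 : ∑ j, ‖(z j)‖ * ‖(ξ j)‖
            ≤ (∑ j, ‖(z j)‖) * enorm' ξ := by
          rw [Finset.sum_mul]
          refine Finset.sum_le_sum fun j _ => ?_
          exact mul_le_mul_of_nonneg_left (abs_apply_le ξ j) (norm_nonneg _)
        calc (-(s:ℂ) * dotC (confj z) ξ).re
            ≤ s * ‖(dotC (confj z) ξ)‖ := by rw [← h2]; exact h1
          _ ≤ s * ((∑ j, ‖(z j)‖) * enorm' ξ) :=
              mul_le_mul_of_nonneg_left (h3.trans h4) hs0
          _ = M * enorm' ξ := by rw [hM]; ring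
      have hstep : densR n ξ * (‖F (z + s • ξ)‖
          * Real.exp ((-(s:ℂ) * dotC (confj z) ξ).re))
          ≤ densR n ξ * (‖F (z + s • ξ)‖ * Real.exp (M * enorm' ξ)) := by
        refine mul_le_mul_of_nonneg_left ?_ (densR_pos ξ).le
        exact mul_le_mul_of_nonneg_left (Real.exp_le_exp.mpr hre) (norm_nonneg _)
      have hfinal : densR n ξ * (‖F (z + s • ξ)‖ * Real.exp (M * enorm' ξ))
          = v ξ * u ξ := by
        rw [hv, hu]
        unfold densR
        rw [show Real.pi ^ (-(n:ℤ)) * Real.exp (-(enorm' ξ)^2)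
            * (‖F (z + s • ξ)‖ * Real.exp (M * enorm' ξ))
            = Real.pi ^ (-(n:ℤ)) * ‖F (z + s • ξ)‖
              * (Real.exp (-(enorm' ξ)^2) * Real.exp (M * enorm' ξ)) from by ring]
        rw [show Real.pi ^ (-(n:ℤ)) * Real.exp (M * enorm' ξ - (enorm' ξ)^2/2)
            * (‖F (z + s • ξ)‖ * Real.exp (-(enorm' ξ)^2/2))
            = Real.pi ^ (-(n:ℤ)) * ‖F (z + s • ξ)‖
              * (Real.exp (M * enorm' ξ - (enorm' ξ)^2/2) * Real.exp (-(enorm' ξ)^2/2)) from by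
          ring]
        rw [← Real.exp_add, ← Real.exp_add]
        congr 1
        ring
      rw [htoReal, hnorm1]
      exact hstep.trans (le_of_eq hfinal)

end

end PtAux
theorem Pt_identity_on_holomorphic (n : ℕ) (F : (Fin n → ℂ) → ℂ)
    (hF : Differentiable ℂ F) (hL2 : MemLp F 2 (gaussianC n)) :
    ∀ t ≥ (0:ℝ), ∀ z, Pt t F z = F z := by
  intro t ht z
  obtain ⟨s, hsdef⟩ : ∃ s : ℝ, s = Real.sqrt (1 - Real.exp (-t)) := ⟨_, rfl⟩
  have hs0 : 0 ≤ s := hsdef ▸ Real.sqrt_nonneg _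
  have hexple : Real.exp (-t) ≤ 1 := Real.exp_le_one_iff.mpr (by linarith)
  have hexppos : 0 < Real.exp (-t) := Real.exp_pos _
  have h1me : 0 ≤ 1 - Real.exp (-t) := by linarith
  have hs1 : s < 1 := by
    rw [hsdef]
    have := Real.sqrt_lt_sqrt h1me (by linarith : 1 - Real.exp (-t) < 1)
    rwa [Real.sqrt_one] at this
  -- the integrand is holomorphic
  have haff : Differentiable ℂ (fun ξ : Fin n → ℂ => z + s • ξ) := by
    have hsm : (fun ξ : Fin n → ℂ => s • ξ) = fun ξ => ((s:ℂ)) • ξ := by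
      funext ξ j
      show s • ξ j = (s:ℂ) * ξ j
      rw [Complex.real_smul]
    refine (differentiable_const z).add ?_
    show Differentiable ℂ (fun ξ : Fin n → ℂ => s • ξ)
    rw [hsm]
    exact differentiable_id.const_smul ((s:ℂ))
  have hdot : Differentiable ℂ (fun ξ : Fin n → ℂ => dotC (confj z) ξ) := by
    unfold dotC
    apply Differentiable.fun_sum
    intro j _
    exact (differentiable_const _).mul
      ((ContinuousLinearMap.proj (R := ℂ) (φ := fun _ : Fin n => ℂ) j).differentiable)
  have hd : Differentiable ℂ (fun ξ : Fin n → ℂ =>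
      F (z + s • ξ) * Complex.exp (-(s:ℂ) * dotC (confj z) ξ)) :=
    (hF.comp haff).mul ((hdot.const_mul (-(s:ℂ))).cexp)
  have hi : Integrable (fun ξ : Fin n → ℂ =>
      F (z + s • ξ) * Complex.exp (-(s:ℂ) * dotC (confj z) ξ)) (gaussianC n) :=
    PtAux.integrable_kernel hF.continuous hL2 z hs0 hs1
  have hmv := PtAux.mean_value hd hi
  have hPt : Pt t F z = ∫ ξ, F (z + s • ξ) *
      Complex.exp (-(s:ℂ) * dotC (confj z) ξ) ∂(gaussianC n) := by
    rw [Pt, hsdef]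
  rw [hPt, hmv]
  have hzero : dotC (confj z) (0 : Fin n → ℂ) = 0 := by
    unfold dotC
    simp
  rw [smul_zero, add_zero, hzero, mul_zero, Complex.exp_zero, mul_one]
end

section
/- For every $t > 0$, $z, w \in \mathbb{C}^n$, the circular averages of the two kernels coincide: $\frac{1}{2\pi}\int_0^{2\pi} K_t(z, e^{i\theta}w)\, d\theta = \frac{1}{2\pi}\int_0^{2\pi} K_t^{\mathrm{ou}}(z, e^{i\theta}w)\, d\theta$, where $K_t(z,w) = \pi^{-n}(1-e^{-t})^{-n}\exp(z\cdot\overline{w} - \frac{e^{-t}|z-w|^2}{1-e^{-t}} - |w|^2)$ and $K_t^{\mathrm{ou}}(z,w) = \pi^{-n}(1-e^{-t})^{-n} e^{-\frac{1}{1-e^{-t}}|w - e^{-t/2}z|^2}$. -/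
open MeasureTheory Complex

noncomputable section CircleHelper

private def Gfun (p q : ℂ) (R : ℝ) : ℂ :=
  ∫ θ in (0:ℝ)..(2*Real.pi), Complex.exp ((p/R) * Complex.exp (-(θ*I)) + (q*R) * Complex.exp (θ*I))

private lemma oint (p q : ℂ) {ρ : ℝ} (hρ : 0 < ρ) :
    (∮ ζ in C((0:ℂ), ρ), (ζ - 0)⁻¹ • Complex.exp (p * ζ⁻¹ + q * ζ)) = I * Gfun p q ρ := by
  rw [circleIntegral, Gfun, ← intervalIntegral.integral_const_mul]
  refine intervalIntegral.integral_congr fun θ _ => ?_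
  have hρ' : (ρ:ℂ) ≠ 0 := Complex.ofReal_ne_zero.2 hρ.ne'
  have h1 : (circleMap 0 ρ θ)⁻¹ = (ρ:ℂ)⁻¹ * Complex.exp (-(θ*I)) := by
    rw [circleMap, zero_add, mul_inv, ← Complex.exp_neg]
  simp only [deriv_circleMap, smul_eq_mul, sub_zero]
  rw [h1, circleMap]
  rw [show p * ((ρ:ℂ)⁻¹ * Complex.exp (-(θ*I))) + q * ((0:ℂ) + ρ * Complex.exp (θ*I))
      = p/ρ * Complex.exp (-(θ*I)) + q*ρ * Complex.exp (θ*I) by rw [div_eq_mul_inv]; ring]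
  rw [zero_add, Complex.exp_neg]
  field_simp

private lemma Gfun_eq (p q : ℂ) {r R : ℝ} (h0 : 0 < r) (hle : r ≤ R) :
    Gfun p q R = Gfun p q r := by
  have hdiff : ∀ ζ : ℂ, ζ ≠ 0 → DifferentiableAt ℂ (fun ζ => Complex.exp (p * ζ⁻¹ + q * ζ)) ζ := by
    intro ζ hζ
    exact (((differentiableAt_const p).mul (differentiableAt_inv hζ)).add
      ((differentiableAt_const q).mul differentiableAt_id)).cexp
  have key := circleIntegral_sub_center_inv_smul_eq_of_differentiable_on_annulus_off_countable
    (c := (0:ℂ)) h0 hle (f := fun ζ => Complex.exp (p * ζ⁻¹ + q * ζ)) (s := ∅)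
    Set.countable_empty
    (fun ζ hζ =>
      (hdiff ζ (fun h => hζ.2 (h ▸ Metric.mem_ball_self h0))).continuousAt.continuousWithinAt)
    (fun ζ hζ => hdiff ζ (fun h => hζ.1.2 (h ▸ Metric.mem_closedBall_self h0.le)))
  rw [oint p q h0, oint p q (h0.trans_le hle)] at key
  exact mul_left_cancel₀ Complex.I_ne_zero key

end CircleHelper

theorem circular_averages_of_kernels_coincide (n : ℕ) (t : ℝ) (ht : 0 < t)
    (z w : Fin n → ℂ) :
    (1 / (2 * Real.pi) : ℂ) *
        ∫ θ in (0:ℝ)..(2 * Real.pi), Kker t z (Complex.exp (θ * Complex.I) • w) =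
      (1 / (2 * Real.pi) : ℂ) *
        ∫ θ in (0:ℝ)..(2 * Real.pi), Kou t z (Complex.exp (θ * Complex.I) • w) := by
  have ha1 : Real.exp (-t) < 1 := Real.exp_lt_one_iff.2 (neg_lt_zero.2 ht)
  set a : ℝ := Real.exp (-t) with ha_def
  set s : ℝ := 1 - a with hs_def
  have hs : 0 < s := by rw [hs_def]; linarith
  have hsC : (s:ℂ) ≠ 0 := Complex.ofReal_ne_zero.2 hs.ne'
  set c : ℝ := Real.exp (-t/2) with hc_def
  have hca : c * c = a := by
    rw [hc_def, ha_def, ← Real.exp_add]; congr 1; ring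
  set b : ℂ := dotC z (confj w) with hb_def
  set X : ℝ := ∑ j, Complex.normSq (z j) with hX_def
  set Y : ℝ := ∑ j, Complex.normSq (w j) with hY_def
  have haC : (a:ℂ) = 1 - (s:ℂ) := by rw [hs_def]; push_cast; ring
  have hsq : ∀ u : Fin n → ℂ, (enorm' u)^2 = ∑ j, Complex.normSq (u j) := fun u =>
    Real.sq_sqrt (Finset.sum_nonneg fun j _ => Complex.normSq_nonneg _)
  have hconjE : ∀ θ:ℝ, (starRingEnd ℂ) (Complex.exp ((θ:ℂ)*I)) = Complex.exp (-(θ*I)) := by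
    intro θ
    rw [← Complex.exp_conj]
    congr 1
    simp [Complex.conj_I]
  have hconjE' : ∀ θ:ℝ, (starRingEnd ℂ) (Complex.exp (-((θ:ℂ)*I))) = Complex.exp ((θ:ℂ)*I) := by
    intro θ
    rw [← Complex.exp_conj]
    congr 1
    simp [Complex.conj_I]
  have hnsqE : ∀ θ:ℝ, Complex.normSq (Complex.exp ((θ:ℂ)*I)) = 1 := by
    intro θ
    rw [Complex.normSq_eq_norm_sq, Complex.norm_exp_ofReal_mul_I]
    norm_num
  have hdot : ∀ θ:ℝ, dotC z (confj (Complex.exp ((θ:ℂ)*I) • w))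
      = Complex.exp (-(θ*I)) * b := by
    intro θ
    rw [← hconjE θ, hb_def]
    simp only [dotC, confj, Pi.smul_apply, smul_eq_mul, map_mul, Finset.mul_sum]
    exact Finset.sum_congr rfl fun j _ => by ring
  have hre : ∀ θ:ℝ, (((Complex.exp (-(θ*I)) * b).re : ℝ) : ℂ)
      = (Complex.exp (-(θ*I)) * b + Complex.exp ((θ:ℂ)*I) * (starRingEnd ℂ) b) / 2 := by
    intro θ
    rw [Complex.re_eq_add_conj]
    congr 2
    rw [map_mul, hconjE' θ]
  have h2 : ∀ θ:ℝ, (enorm' (z - Complex.exp ((θ:ℂ)*I) • w))^2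
      = X + Y - 2*(Complex.exp (-(θ*I)) * b).re := by
    intro θ
    rw [hsq]
    have e1 : ∀ j, Complex.normSq ((z - Complex.exp ((θ:ℂ)*I) • w) j)
        = Complex.normSq (z j) + Complex.normSq (w j)
          - 2*(Complex.exp (-(θ*I)) * (z j * (starRingEnd ℂ) (w j))).re := by
      intro j
      simp only [Pi.sub_apply, Pi.smul_apply, smul_eq_mul]
      rw [Complex.normSq_sub, Complex.normSq_mul, hnsqE θ, one_mul, map_mul, hconjE θ]
      ring_nf
    rw [Finset.sum_congr rfl fun j _ => e1 j]
    rw [Finset.sum_sub_distrib, Finset.sum_add_distrib]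
    have e2 : ∑ j, 2*(Complex.exp (-(θ*I)) * (z j * (starRingEnd ℂ) (w j))).re
        = 2*(Complex.exp (-(θ*I)) * b).re := by
      rw [hb_def, dotC]
      simp only [confj]
      rw [Finset.mul_sum, Complex.re_sum, Finset.mul_sum]
    rw [e2, hX_def, hY_def]
  have hYw : ∀ θ:ℝ, (enorm' (Complex.exp ((θ:ℂ)*I) • w))^2 = Y := by
    intro θ
    rw [hsq, hY_def]
    refine Finset.sum_congr rfl fun j _ => ?_
    simp only [Pi.smul_apply, smul_eq_mul]
    rw [Complex.normSq_mul, hnsqE θ, one_mul]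
  have h3 : ∀ θ:ℝ, (enorm' (Complex.exp ((θ:ℂ)*I) • w - Real.exp (-t/2) • z))^2
      = Y + a*X - 2*c*(Complex.exp (-(θ*I)) * b).re := by
    intro θ
    rw [hsq]
    have e1 : ∀ j, Complex.normSq ((Complex.exp ((θ:ℂ)*I) • w - Real.exp (-t/2) • z) j)
        = Complex.normSq (w j) + a * Complex.normSq (z j)
          - 2*c*(Complex.exp (-(θ*I)) * (z j * (starRingEnd ℂ) (w j))).re := by
      intro j
      simp only [Pi.sub_apply, Pi.smul_apply, smul_eq_mul, Complex.real_smul, ← hc_def]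
      rw [Complex.normSq_sub, Complex.normSq_mul, hnsqE θ, one_mul,
        Complex.normSq_mul, Complex.normSq_ofReal, hca]
      have e3 : (Complex.exp ((θ:ℂ)*I) * w j * (starRingEnd ℂ) ((c:ℂ) * z j)).re
          = c * ((starRingEnd ℂ) (Complex.exp (-((θ:ℂ)*I)) * (z j * (starRingEnd ℂ) (w j)))).re := by
        rw [map_mul, map_mul, map_mul, hconjE' θ, Complex.conj_conj, Complex.conj_ofReal]
        rw [show Complex.exp ((θ:ℂ)*I) * w j * ((c:ℂ) * (starRingEnd ℂ) (z j))
            = (c:ℂ) * (Complex.exp ((θ:ℂ)*I) * ((starRingEnd ℂ) (z j) * w j)) by ring]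
        rw [Complex.re_ofReal_mul]
      rw [e3, Complex.conj_re]
      ring
    rw [Finset.sum_congr rfl fun j _ => e1 j]
    rw [Finset.sum_sub_distrib, Finset.sum_add_distrib, ← Finset.mul_sum]
    have e2 : ∑ j, 2*c*(Complex.exp (-(θ*I)) * (z j * (starRingEnd ℂ) (w j))).re
        = 2*c*(Complex.exp (-(θ*I)) * b).re := by
      rw [hb_def, dotC]
      simp only [confj]
      rw [Finset.mul_sum, Complex.re_sum, Finset.mul_sum]
    rw [e2, hX_def, hY_def]
  have hKker : ∀ θ:ℝ, Kker t z (Complex.exp ((θ:ℂ)*I) • w)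
      = (((Real.pi ^ (-(n:ℤ)) * s ^ (-(n:ℤ)) : ℝ) : ℂ) * Complex.exp (-((a:ℂ) * X + Y) / s)) *
        Complex.exp ((b/(s:ℂ)) * Complex.exp (-(θ*I)) + ((a:ℂ) * (starRingEnd ℂ) b/(s:ℂ)) * Complex.exp ((θ:ℂ)*I)) := by
    intro θ
    simp only [Kker, ← ha_def, ← hs_def]
    rw [hdot θ, h2 θ, hYw θ]
    rw [mul_assoc, ← Complex.exp_add]
    congr 1
    push_cast
    rw [hre θ, haC]
    field_simp
    ring
  have hKou : ∀ θ:ℝ, Kou t z (Complex.exp ((θ:ℂ)*I) • w)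
      = (((Real.pi ^ (-(n:ℤ)) * s ^ (-(n:ℤ)) : ℝ) : ℂ) * Complex.exp (-((a:ℂ) * X + Y) / s)) *
        Complex.exp (((c:ℂ)*b/(s:ℂ)) * Complex.exp (-(θ*I)) + ((c:ℂ) * (starRingEnd ℂ) b/(s:ℂ)) * Complex.exp ((θ:ℂ)*I)) := by
    intro θ
    simp only [Kou, ← ha_def, ← hs_def, ← hc_def]
    rw [h3 θ]
    have expeq : ((-(1 / s) * (Y + a * X - 2 * c * (Complex.exp (-(θ*I)) * b).re) : ℝ) : ℂ)
        = -((a:ℂ) * X + Y) / s + (((c:ℂ)*b/(s:ℂ)) * Complex.exp (-(θ*I))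
            + ((c:ℂ) * (starRingEnd ℂ) b/(s:ℂ)) * Complex.exp ((θ:ℂ)*I)) := by
      push_cast
      rw [hre θ]
      field_simp
      ring
    rw [Complex.ofReal_mul, Complex.ofReal_exp, expeq, Complex.exp_add, mul_assoc]
  set CC : ℂ := ((Real.pi ^ (-(n:ℤ)) * s ^ (-(n:ℤ)) : ℝ) : ℂ) * Complex.exp (-((a:ℂ) * X + Y) / s) with hCC_def
  set p : ℂ := b/(s:ℂ) with hp_def
  set q : ℂ := (a:ℂ) * (starRingEnd ℂ) b/(s:ℂ) with hq_def
  have hRne : ((Real.exp (t/2) : ℝ):ℂ) ≠ 0 := Complex.ofReal_ne_zero.2 (Real.exp_pos _).ne'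
  have hcR : (c:ℂ) * ((Real.exp (t/2) : ℝ):ℂ) = 1 := by
    rw [hc_def, ← Complex.ofReal_mul, ← Real.exp_add, show (-t/2 + t/2 : ℝ) = 0 by ring,
      Real.exp_zero, Complex.ofReal_one]
  have h5 : (∫ θ in (0:ℝ)..(2 * Real.pi), Kker t z (Complex.exp (θ * Complex.I) • w))
      = CC * Gfun p q 1 := by
    rw [Gfun, ← intervalIntegral.integral_const_mul]
    refine intervalIntegral.integral_congr fun θ _ => ?_
    rw [hKker θ]
    norm_num
  have h6 : (∫ θ in (0:ℝ)..(2 * Real.pi), Kou t z (Complex.exp (θ * Complex.I) • w))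
      = CC * Gfun p q (Real.exp (t/2)) := by
    rw [Gfun, ← intervalIntegral.integral_const_mul]
    refine intervalIntegral.integral_congr fun θ _ => ?_
    rw [hKou θ]
    have e1 : p / ((Real.exp (t/2) : ℝ):ℂ) = (c:ℂ)*b/(s:ℂ) := by
      rw [hp_def, div_div, div_eq_div_iff (mul_ne_zero hsC hRne) hsC]
      linear_combination (-(b * (s:ℂ))) * hcR
    have e2 : q * ((Real.exp (t/2) : ℝ):ℂ) = (c:ℂ) * (starRingEnd ℂ) b/(s:ℂ) := by
      have haCc : (a:ℂ) = (c:ℂ) * (c:ℂ) := by rw [← Complex.ofReal_mul, hca]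
      rw [hq_def, haCc, div_mul_eq_mul_div, div_eq_div_iff hsC hsC]
      linear_combination ((c:ℂ) * (starRingEnd ℂ) b * (s:ℂ)) * hcR
    rw [e1, e2]
  rw [h5, h6, Gfun_eq p q one_pos (Real.one_le_exp (by linarith))]
end

section
/- In dimension $n = 1$, let $f(w) = |w|^{1/3}$ and $g(w) = |w|^4$ on $\mathbb{C} \simeq \mathbb{R}^2$. Then for all $z \ne 0$: (i) $\partial^2_{z\overline{z}} f(z) \cdot \partial^2_{z\overline{z}} g(z) \ge 0$ (in fact both factors are nonnegative since $f, g$ are subharmonic), but (ii) $\mathrm{Tr}\big((D^2 f)(z)(D^2 g)(z)\big) = -\frac{4}{3}|z|^{1/3} \le 0$, where $D^2$ denotes the real Hessian on $\mathbb{R}^2$. -/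
open MeasureTheory Complex

/-- Second real derivative (Hessian as bilinear form) of `h : ℂ → ℝ` in directions `u, v`. -/
noncomputable def H2 (h : ℂ → ℝ) (u v : ℂ) (z : ℂ) : ℝ :=
  fderiv ℝ (fun w => fderiv ℝ h w v) z u

/-!
Both functions are radial powers `(‖w‖²)^c`, with `c = 1/6` and `c = 2`. Away from the origin the
Hessian of `(‖w‖²)^c` is `2c (‖z‖²)^(c-2) (2(c-1) z zᵀ + ‖z‖² Id)`: its eigenvalues are
`2c(2c-1) (‖z‖²)^(c-1)` in the radial direction and `2c (‖z‖²)^(c-1)` in the tangential one.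
Hence the Laplacian `4c² (‖z‖²)^(c-1)` is nonnegative for every `c`, while the trace of the
product of two such Hessians is `4ab ((2a-1)(2b-1) + 1) (‖z‖²)^(a+b-2)`, which is negative for
`a = 1/6`, `b = 2` because the radial eigenvalue of `|w|^(1/3)` is negative.
-/

open scoped RealInnerProductSpace

section InnerProductSpace

variable {E : Type*} [NormedAddCommGroup E] [InnerProductSpace ℝ E]

theorem hasFDerivAt_rpow_sq_norm (c : ℝ) {z : E} (hz : z ≠ 0) :
    HasFDerivAt (fun x : E => (‖x‖ ^ 2) ^ c)
      ((c * (‖z‖ ^ 2) ^ (c - 1)) • (2 • innerSL ℝ z)) z :=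
  (Real.hasDerivAt_rpow_const (Or.inl (by positivity))).comp_hasFDerivAt z
    (hasStrictFDerivAt_norm_sq z).hasFDerivAt

theorem fderiv_rpow_sq_norm_apply (c : ℝ) {z : E} (hz : z ≠ 0) (v : E) :
    fderiv ℝ (fun x : E => (‖x‖ ^ 2) ^ c) z v = 2 * c * (‖z‖ ^ 2) ^ (c - 1) * ⟪v, z⟫ := by
  rw [(hasFDerivAt_rpow_sq_norm c hz).fderiv]
  simp only [smul_apply, coe_innerSL_apply, nsmul_eq_mul, Nat.cast_ofNat, smul_eq_mul,
    real_inner_comm z v]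
  ring

theorem fderiv_fderiv_rpow_sq_norm_apply (c : ℝ) {z : E} (hz : z ≠ 0) (u v : E) :
    fderiv ℝ (fun w => fderiv ℝ (fun x : E => (‖x‖ ^ 2) ^ c) w v) z u =
      2 * c * (2 * (c - 1) * (‖z‖ ^ 2) ^ (c - 2) * ⟪z, u⟫ * ⟪z, v⟫
        + (‖z‖ ^ 2) ^ (c - 1) * ⟪u, v⟫) := by
  have hfirst : (fun w => fderiv ℝ (fun x : E => (‖x‖ ^ 2) ^ c) w v) =ᶠ[nhds z]
      fun w => 2 * c * ((‖w‖ ^ 2) ^ (c - 1) * ⟪v, w⟫) := by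
    filter_upwards [isOpen_ne.mem_nhds hz] with w hw
    rw [fderiv_rpow_sq_norm_apply c hw v, mul_assoc]
  have hsecond : HasFDerivAt (fun w => 2 * c * ((‖w‖ ^ 2) ^ (c - 1) * ⟪v, w⟫)) _ z :=
    ((hasFDerivAt_rpow_sq_norm (c - 1) hz).mul (innerSL ℝ v).hasFDerivAt).const_mul (2 * c)
  rw [hfirst.fderiv_eq, hsecond.fderiv]
  simp only [coe_innerSL_apply, real_inner_comm z v, sub_sub, one_add_one_eq_two, smul_add,
    add_apply, smul_apply, smul_eq_mul, nsmul_eq_mul, Nat.cast_ofNat, real_inner_comm v u]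
  ring

end InnerProductSpace

theorem Complex.real_inner_one_right (z : ℂ) : ⟪z, 1⟫ = z.re := by
  simp [Complex.inner]

theorem Complex.real_inner_I_right (z : ℂ) : ⟪z, I⟫ = z.im := by
  simp [Complex.inner]

theorem rpow_sub_one_eq_rpow_sub_two_mul {x : ℝ} (hx : x ≠ 0) (c : ℝ) :
    x ^ (c - 1) = x ^ (c - 2) * x := by
  rw [← Real.rpow_add_one hx]
  ring_nf

theorem H2_one_one_add_H2_I_I_rpow_sq_norm (c : ℝ) {z : ℂ} (hz : z ≠ 0) :
    H2 (fun w => (‖w‖ ^ 2) ^ c) 1 1 z + H2 (fun w => (‖w‖ ^ 2) ^ c) I I z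
      = 4 * c ^ 2 * (‖z‖ ^ 2) ^ (c - 1) := by
  have hN : ‖z‖ ^ 2 ≠ 0 := by positivity
  simp only [H2, fderiv_fderiv_rpow_sq_norm_apply c hz]
  simp only [Complex.real_inner_one_right, Complex.real_inner_I_right, real_inner_self_eq_norm_sq,
    norm_one, norm_I, one_pow]
  rw [rpow_sub_one_eq_rpow_sub_two_mul hN, Complex.sq_norm, Complex.normSq_apply]
  ring

theorem H2_trace_mul_rpow_sq_norm (a b : ℝ) {z : ℂ} (hz : z ≠ 0) :
    H2 (fun w => (‖w‖ ^ 2) ^ a) 1 1 z * H2 (fun w => (‖w‖ ^ 2) ^ b) 1 1 z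
      + H2 (fun w => (‖w‖ ^ 2) ^ a) 1 I z * H2 (fun w => (‖w‖ ^ 2) ^ b) I 1 z
      + H2 (fun w => (‖w‖ ^ 2) ^ a) I 1 z * H2 (fun w => (‖w‖ ^ 2) ^ b) 1 I z
      + H2 (fun w => (‖w‖ ^ 2) ^ a) I I z * H2 (fun w => (‖w‖ ^ 2) ^ b) I I z
      = 4 * a * b * ((2 * a - 1) * (2 * b - 1) + 1) * (‖z‖ ^ 2) ^ (a + b - 2) := by
  have hN : ‖z‖ ^ 2 ≠ 0 := by positivity
  have hsum : (‖z‖ ^ 2) ^ (a + b - 2)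
      = (‖z‖ ^ 2) ^ (a - 2) * (‖z‖ ^ 2) ^ (b - 2) * (‖z‖ ^ 2) ^ 2 := by
    rw [← Real.rpow_add (by positivity), ← Real.rpow_add_natCast hN]
    ring_nf
  simp only [H2, fderiv_fderiv_rpow_sq_norm_apply _ hz]
  simp only [Complex.real_inner_one_right, Complex.real_inner_I_right, real_inner_self_eq_norm_sq,
    one_im, I_re, norm_one, norm_I, one_pow]
  rw [rpow_sub_one_eq_rpow_sub_two_mul hN, rpow_sub_one_eq_rpow_sub_two_mul hN, hsum,
    Complex.sq_norm, Complex.normSq_apply]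
  ring

theorem real_vs_complex_hessian_example :
    ∀ z : ℂ, z ≠ 0 →
      (0 ≤ (1/4) * (H2 (fun w => ‖w‖ ^ ((1:ℝ)/3)) 1 1 z
            + H2 (fun w => ‖w‖ ^ ((1:ℝ)/3)) Complex.I Complex.I z)) ∧
      (0 ≤ (1/4) * (H2 (fun w => ‖w‖ ^ (4:ℕ)) 1 1 z
            + H2 (fun w => ‖w‖ ^ (4:ℕ)) Complex.I Complex.I z)) ∧
      (0 ≤ ((1/4) * (H2 (fun w => ‖w‖ ^ ((1:ℝ)/3)) 1 1 z
            + H2 (fun w => ‖w‖ ^ ((1:ℝ)/3)) Complex.I Complex.I z)) *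
          ((1/4) * (H2 (fun w => ‖w‖ ^ (4:ℕ)) 1 1 z
            + H2 (fun w => ‖w‖ ^ (4:ℕ)) Complex.I Complex.I z))) ∧
      (H2 (fun w => ‖w‖ ^ ((1:ℝ)/3)) 1 1 z * H2 (fun w => ‖w‖ ^ (4:ℕ)) 1 1 z
        + H2 (fun w => ‖w‖ ^ ((1:ℝ)/3)) 1 Complex.I z
            * H2 (fun w => ‖w‖ ^ (4:ℕ)) Complex.I 1 z
        + H2 (fun w => ‖w‖ ^ ((1:ℝ)/3)) Complex.I 1 z
            * H2 (fun w => ‖w‖ ^ (4:ℕ)) 1 Complex.I z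
        + H2 (fun w => ‖w‖ ^ ((1:ℝ)/3)) Complex.I Complex.I z
            * H2 (fun w => ‖w‖ ^ (4:ℕ)) Complex.I Complex.I z
        = -(4/3) * ‖z‖ ^ ((1:ℝ)/3)) := by
  intro z hz
  have hf : (fun w : ℂ => ‖w‖ ^ ((1:ℝ)/3)) = fun w => (‖w‖ ^ 2) ^ ((1:ℝ)/6) := by
    funext w
    rw [← Real.rpow_natCast_mul (norm_nonneg w)]
    norm_num
  have hg : (fun w : ℂ => ‖w‖ ^ (4:ℕ)) = fun w => (‖w‖ ^ 2) ^ (2:ℝ) := by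
    funext w
    rw [Real.rpow_two, ← pow_mul]
  have hf_nonneg : 0 ≤ (1/4) * (4 * ((1:ℝ)/6) ^ 2 * (‖z‖ ^ 2) ^ ((1:ℝ)/6 - 1)) := by positivity
  have hg_nonneg : 0 ≤ (1/4) * (4 * (2:ℝ) ^ 2 * (‖z‖ ^ 2) ^ ((2:ℝ) - 1)) := by positivity
  rw [hf, hg, H2_one_one_add_H2_I_I_rpow_sq_norm _ hz, H2_one_one_add_H2_I_I_rpow_sq_norm _ hz,
    H2_trace_mul_rpow_sq_norm _ _ hz, congrFun hf z]
  refine ⟨hf_nonneg, hg_nonneg, mul_nonneg hf_nonneg hg_nonneg, ?_⟩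
  norm_num
end
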